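/- arXiv:1709.06226 — 3 statements merged into one kernel-verified Lean document; each statement's English description precedes it below -/
import Mathlib

section
/- If X is a consonant topological space, then A(K(X)) and K(A(X)) are homeomorphic via the map σ(𝒜) = {A closed | ∀K ∈ 𝒜, A ∩ K ≠ ∅}, with inverse τ(𝒦) = {K compact saturated | ∀A ∈ 𝒦, A ∩ K ≠ ∅}. -/
open Set Topology

/-- The lower powerspace: closed subsets of `X`. -/
def LowerPS (X : Type*) [TopologicalSpace X] : Type _ := {A : Set X // IsClosed A}

/-- Lower Vietoris topology, generated by the sets `◇U = {A | A ∩ U ≠ ∅}` for `U` open. -/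
instance (X : Type*) [TopologicalSpace X] : TopologicalSpace (LowerPS X) :=
  .generateFrom {S | ∃ U : Set X, IsOpen U ∧ S = {A : LowerPS X | (A.1 ∩ U).Nonempty}}

/-- The upper powerspace: compact saturated subsets of `X`
(saturated = intersection of all open neighborhoods). -/
def UpperPS (X : Type*) [TopologicalSpace X] : Type _ :=
  {K : Set X // IsCompact K ∧ K = ⋂₀ {U : Set X | IsOpen U ∧ K ⊆ U}}

/-- Upper Vietoris topology, generated by the sets `□U = {K | K ⊆ U}` for `U` open. -/
instance (X : Type*) [TopologicalSpace X] : TopologicalSpace (UpperPS X) :=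
  .generateFrom {S | ∃ U : Set X, IsOpen U ∧ S = {K : UpperPS X | K.1 ⊆ U}}

/-- A `Π⁰₂` subset. -/
def IsPi02 {Y : Type*} [TopologicalSpace Y] (S : Set Y) : Prop :=
  ∃ U V : ℕ → Set Y, (∀ i, IsOpen (U i)) ∧ (∀ i, IsOpen (V i)) ∧
    ∀ y, y ∈ S ↔ ∀ i, y ∈ U i → y ∈ V i

/-- The Scott topology on `P(ω)`, generated by the sets `{x | F ⊆ x}` for finite `F`. -/
instance : TopologicalSpace (Set ℕ) :=
  .generateFrom {S | ∃ F : Finset ℕ, S = {x : Set ℕ | ↑F ⊆ x}}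

/-- A space is quasi-Polish iff it is homeomorphic to a `Π⁰₂` subspace of `P(ω)`
with the Scott topology. -/
def QuasiPolish (X : Type*) [TopologicalSpace X] : Prop :=
  ∃ S : Set (Set ℕ), IsPi02 S ∧ Nonempty (X ≃ₜ S)

/-- Scott-open subsets of a preorder. -/
def IsScottOpen {α : Type*} [Preorder α] (U : Set α) : Prop :=
  (∀ ⦃a b : α⦄, a ≤ b → a ∈ U → b ∈ U) ∧
  ∀ d : Set α, d.Nonempty → DirectedOn (· ≤ ·) d → ∀ a : α, IsLUB d a → a ∈ U →
    (d ∩ U).Nonempty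

/-- The Scott topology on a preorder. -/
def scottTop (α : Type*) [Preorder α] : TopologicalSpace α := .generateFrom {U | IsScottOpen U}

/-- The frame of open subsets of `X`, ordered by inclusion. -/
def OpensT (X : Type*) [TopologicalSpace X] : Type _ := {U : Set X // IsOpen U}

instance (X : Type*) [TopologicalSpace X] : PartialOrder (OpensT X) :=
  inferInstanceAs (PartialOrder {U : Set X // IsOpen U})

/-- `O(X)` carries the Scott topology. -/
instance (X : Type*) [TopologicalSpace X] : TopologicalSpace (OpensT X) := scottTop (OpensT X)

/-- `□◇U` in `K(A(X))`. -/
def boxDia {X : Type*} [TopologicalSpace X] (U : Set X) : Set (UpperPS (LowerPS X)) :=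
  {𝒦 | ∀ A ∈ 𝒦.1, ((A : LowerPS X).1 ∩ U).Nonempty}

/-- `◇□U` in `A(K(X))`. -/
def diaBox {X : Type*} [TopologicalSpace X] (U : Set X) : Set (LowerPS (UpperPS X)) :=
  {𝒜 | ∃ K ∈ 𝒜.1, (K : UpperPS X).1 ⊆ U}

/-- A space is consonant iff every Scott-open family of opens containing `U` contains
a compact-saturated filter neighborhood `▽K` of `U`. -/
def Consonant (X : Type*) [TopologicalSpace X] : Prop :=
  ∀ H : Set (OpensT X), IsScottOpen H → ∀ U ∈ H,
    ∃ K : UpperPS X, K.1 ⊆ U.1 ∧ ∀ V : OpensT X, K.1 ⊆ V.1 → V ∈ H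

/-- A space is co-consonant. -/
def CoConsonant (Y : Type*) [TopologicalSpace Y] : Prop :=
  ∀ H : Set (OpensT Y), IsScottOpen H → ∀ U ∈ H,
    ∃ F : Finset (Set Y), (∀ A ∈ F, IsClosed A) ∧ (∀ A ∈ F, (U.1 ∩ A).Nonempty) ∧
      ∀ V : OpensT Y, (∀ A ∈ F, (V.1 ∩ A).Nonempty) → V ∈ H

/-! A closed set hits every member of `𝒜 ⊆ K(X)` and a compact saturated set hits every member
of `𝒦 ⊆ A(X)`: `σ` and `τ` take transversals. If `K ∉ 𝒜` with `𝒜` closed, some `□U ∋ K` misses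
`𝒜`, and then `Uᶜ ∈ σ 𝒜` separates `K` from `τ (σ 𝒜)`. If `A ∉ 𝒦` with `𝒦` saturated, every
member of `𝒦` meets `Aᶜ`; the opens `V` with `𝒦 ⊆ ◇V` form a Scott-open family by compactness
of `𝒦`, so consonance yields a compact `K ⊆ Aᶜ` in `τ 𝒦`, separating `A` from `σ (τ 𝒦)`.
For continuity, `σ⁻¹(□◇U) = ◇□U`; since `◇(U ∪ V) = ◇U ∪ ◇V`, compactness puts a finite
intersection of sets `◇U` between the compact set `σ 𝒜` and any open `𝒰 ⊇ σ 𝒜`, so the sets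
`□◇U` suffice. Dually, consonance gives `τ⁻¹(◇𝒱) = ⋃ {□◇U | □U ⊆ 𝒱}`. -/

open TopologicalSpace

theorem IsCompact.exists_finite_sInter_subbasis_subset {α : Type*} [t : TopologicalSpace α]
    {s : Set (Set α)} (hs : t = generateFrom s) (hempty : ∅ ∈ s)
    (hunion : ∀ u ∈ s, ∀ v ∈ s, u ∪ v ∈ s) {K U : Set α} (hK : IsCompact K) (hU : IsOpen U)
    (hKU : K ⊆ U) : ∃ f ⊆ s, f.Finite ∧ K ⊆ ⋂₀ f ∧ ⋂₀ f ⊆ U := by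
  refine hK.induction_on (p := fun L => ∃ f ⊆ s, f.Finite ∧ L ⊆ ⋂₀ f ∧ ⋂₀ f ⊆ U)
    ⟨{∅}, by simpa, finite_singleton _, by simp, by simp⟩ ?_ ?_ ?_
  · rintro L L' hLL' ⟨f, hfs, hf, hL'f, hfU⟩
    exact ⟨f, hfs, hf, hLL'.trans hL'f, hfU⟩
  · rintro L L' ⟨f, hfs, hf, hLf, hfU⟩ ⟨g, hgs, hg, hL'g, hgU⟩
    have hinter : ⋂₀ ((fun p => p.1 ∪ p.2) '' f ×ˢ g) = ⋂₀ f ∪ ⋂₀ g := by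
      rw [sInter_image, sInter_union_sInter]
    refine ⟨(fun p => p.1 ∪ p.2) '' f ×ˢ g, ?_, (hf.prod hg).image _, ?_, ?_⟩
    · rintro _ ⟨⟨u, v⟩, ⟨hu, hv⟩, rfl⟩
      exact hunion u (hfs hu) v (hgs hv)
    · exact hinter ▸ union_subset_union hLf hL'g
    · exact hinter ▸ union_subset hfU hgU
  · intro x hx
    have hB := isTopologicalBasis_of_subbasis hs
    obtain ⟨_, ⟨f, ⟨hf, hfs⟩, rfl⟩, hxf, hfU⟩ := hB.exists_subset_of_mem_open (hKU hx) hU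
    exact ⟨⋂₀ f, mem_nhdsWithin_of_mem_nhds ((hB.isOpen ⟨f, ⟨hf, hfs⟩, rfl⟩).mem_nhds hxf),
      f, hfs, hf, subset_rfl, hfU⟩

section

variable {X : Type*} [TopologicalSpace X]

namespace LowerPS

def dia (U : Set X) : Set (LowerPS X) := {A | (A.1 ∩ U).Nonempty}

theorem isOpen_dia {U : Set X} (hU : IsOpen U) : IsOpen (dia U) :=
  GenerateOpen.basic _ ⟨U, hU, rfl⟩

theorem dia_mono {U V : Set X} (h : U ⊆ V) : dia U ⊆ dia V :=
  fun _ hA => hA.mono (inter_subset_inter_right _ h)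

theorem dia_empty : dia (∅ : Set X) = ∅ := by
  simp [dia]

theorem dia_union (U V : Set X) : dia (U ∪ V) = dia U ∪ dia V := by
  ext A
  simp [dia, inter_union_distrib_left, union_nonempty]

theorem specializes_of_subset {A B : LowerPS X} (h : A.1 ⊆ B.1) : B ⤳ A := by
  show 𝓝 B ≤ 𝓝 A
  rw [nhds_generateFrom, nhds_generateFrom]
  refine le_iInf₂ ?_
  rintro _ ⟨hA, U, hU, rfl⟩
  exact iInf₂_le _ ⟨hA.mono (inter_subset_inter_left _ h), U, hU, rfl⟩

end LowerPS

namespace UpperPS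

def box (U : Set X) : Set (UpperPS X) := {K | K.1 ⊆ U}

theorem isOpen_box {U : Set X} (hU : IsOpen U) : IsOpen (box U) :=
  GenerateOpen.basic _ ⟨U, hU, rfl⟩

theorem isTopologicalBasis_box :
    IsTopologicalBasis {𝒲 : Set (UpperPS X) | ∃ U, IsOpen U ∧ 𝒲 = box U} where
  exists_subset_inter := by
    rintro _ ⟨U, hU, rfl⟩ _ ⟨V, hV, rfl⟩ K hK
    exact ⟨box (U ∩ V), ⟨U ∩ V, hU.inter hV, rfl⟩, subset_inter hK.1 hK.2,
      fun _ hK' => ⟨hK'.trans inter_subset_left, hK'.trans inter_subset_right⟩⟩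
  sUnion_eq := sUnion_eq_univ_iff.2 fun K => ⟨box univ, ⟨univ, isOpen_univ, rfl⟩, subset_univ _⟩
  eq_generateFrom := rfl

theorem exists_box_subset {𝒲 : Set (UpperPS X)} (h𝒲 : IsOpen 𝒲) {K : UpperPS X} (hK : K ∈ 𝒲) :
    ∃ U, IsOpen U ∧ K.1 ⊆ U ∧ box U ⊆ 𝒲 := by
  obtain ⟨_, ⟨U, hU, rfl⟩, hKU, hU𝒲⟩ := isTopologicalBasis_box.exists_subset_of_mem_open hK h𝒲
  exact ⟨U, hU, hKU, hU𝒲⟩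

theorem mem_of_specializes (K : UpperPS X) {x y : X} (hyx : y ⤳ x) (hx : x ∈ K.1) : y ∈ K.1 := by
  rw [K.2.2]
  exact fun U ⟨hU, hKU⟩ => hyx.mem_open hU (hKU hx)

theorem continuous_of_isOpen_preimage_box {Y Z : Type*} [tY : TopologicalSpace Y]
    [TopologicalSpace Z] {s : Set (Set Y)} (hs : tY = generateFrom s) (hempty : ∅ ∈ s)
    (hunion : ∀ u ∈ s, ∀ v ∈ s, u ∪ v ∈ s) {f : Z → UpperPS Y}
    (hf : ∀ S ∈ s, IsOpen (f ⁻¹' box S)) : Continuous f := by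
  refine continuous_generateFrom_iff.2 ?_
  rintro _ ⟨U, hU, rfl⟩
  refine isOpen_iff_forall_mem_open.2 fun z hz => ?_
  obtain ⟨F, hFs, hF, hzF, hFU⟩ :=
    (f z).2.1.exists_finite_sInter_subbasis_subset hs hempty hunion hU hz
  refine ⟨⋂ S ∈ F, f ⁻¹' box S, fun z' hz' => ?_, hF.isOpen_biInter fun S hS => hf S (hFs hS),
    mem_iInter₂.2 fun S hS => hzF.trans (sInter_subset_of_mem hS)⟩
  exact (subset_sInter fun S hS => mem_iInter₂.1 hz' S hS).trans hFU

end UpperPS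

theorem isOpen_boxDia {U : Set X} (hU : IsOpen U) : IsOpen (boxDia U) :=
  UpperPS.isOpen_box (LowerPS.isOpen_dia hU)

theorem isOpen_diaBox {U : Set X} (hU : IsOpen U) : IsOpen (diaBox U) :=
  LowerPS.isOpen_dia (UpperPS.isOpen_box hU)

open LowerPS UpperPS

def closedTransversals (𝒜 : Set (UpperPS X)) : Set (LowerPS X) :=
  {A | ∀ K ∈ 𝒜, (A.1 ∩ K.1).Nonempty}

def compactTransversals (𝒦 : Set (LowerPS X)) : Set (UpperPS X) :=
  {K | ∀ A ∈ 𝒦, (A.1 ∩ K.1).Nonempty}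

theorem closedTransversals_subset_dia_iff {𝒜 : Set (UpperPS X)} {U : Set X} (hU : IsOpen U) :
    closedTransversals 𝒜 ⊆ dia U ↔ (𝒜 ∩ box U).Nonempty := by
  refine ⟨fun h => ?_, fun ⟨K, hK, hKU⟩ A hA => (hA K hK).mono (inter_subset_inter_right _ hKU)⟩
  by_contra h𝒜
  have hUc : (⟨Uᶜ, hU.isClosed_compl⟩ : LowerPS X) ∈ closedTransversals 𝒜 := fun K hK =>
    inter_comm K.1 _ ▸ inter_compl_nonempty_iff.2 fun hKU => h𝒜 ⟨K, hK, hKU⟩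
  obtain ⟨x, hxU, hx⟩ := h hUc
  exact hxU hx

theorem compactTransversals_closedTransversals {𝒜 : Set (UpperPS X)} (h𝒜 : IsClosed 𝒜) :
    compactTransversals (closedTransversals 𝒜) = 𝒜 := by
  refine Subset.antisymm (fun K hK => ?_) fun K hK A hA => hA K hK
  by_contra hK𝒜
  obtain ⟨U, hU, hKU, hU𝒜⟩ := exists_box_subset h𝒜.isOpen_compl hK𝒜
  obtain ⟨A, hA, hAU⟩ := not_subset.1 <|
    (closedTransversals_subset_dia_iff hU).not.2 fun ⟨K', hK', hK'U⟩ => hU𝒜 hK'U hK'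
  exact hAU ((hK A hA).mono (inter_subset_inter_right _ hKU))

theorem UpperPS.subset_dia_compl_of_notMem (𝒦 : UpperPS (LowerPS X)) {A : LowerPS X}
    (hA : A ∉ 𝒦.1) : 𝒦.1 ⊆ dia A.1ᶜ := fun _ hA' =>
  inter_compl_nonempty_iff.2 fun hA'A => hA (𝒦.mem_of_specializes (specializes_of_subset hA'A) hA')

theorem isScottOpen_setOf_mem_boxDia (𝒦 : UpperPS (LowerPS X)) :
    IsScottOpen {V : OpensT X | 𝒦 ∈ boxDia V.1} := by
  refine ⟨fun V W hVW hV => (dia_mono hVW).trans' hV, fun d hd hdir V hV h𝒦 => ?_⟩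
  have hVd : V ≤ ⟨⋃ W ∈ d, W.1, isOpen_biUnion fun W _ => W.2⟩ :=
    hV.2 fun W hW => subset_biUnion_of_mem (u := Subtype.val) hW
  have hcover : 𝒦.1 ⊆ ⋃ W : d, dia W.1.1 := by
    intro A hA
    obtain ⟨x, hxA, hxV⟩ := h𝒦 A hA
    obtain ⟨W, hW, hxW⟩ := mem_iUnion₂.1 (hVd hxV)
    exact mem_iUnion.2 ⟨⟨W, hW⟩, x, hxA, hxW⟩
  have : Nonempty d := hd.to_subtype
  obtain ⟨W, hW⟩ := 𝒦.2.1.elim_directed_cover _ (fun W => isOpen_dia W.1.2) hcover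
    (hdir.directed_val.mono_comp _ (g := fun W : OpensT X => dia W.1) fun _ _ h => dia_mono h)
  exact ⟨W.1, W.2, hW⟩

theorem Consonant.compactTransversals_inter_box_nonempty_iff (hX : Consonant X)
    (𝒦 : UpperPS (LowerPS X)) {U : Set X} (hU : IsOpen U) :
    (compactTransversals 𝒦.1 ∩ box U).Nonempty ↔ 𝒦 ∈ boxDia U := by
  refine ⟨fun ⟨K, hK, hKU⟩ A hA => (hK A hA).mono (inter_subset_inter_right _ hKU), fun h𝒦 => ?_⟩
  obtain ⟨K, hKU, hK⟩ := hX _ (isScottOpen_setOf_mem_boxDia 𝒦) ⟨U, hU⟩ h𝒦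
  refine ⟨K, fun A hA => ?_, hKU⟩
  by_contra hAK
  obtain ⟨x, hxA, hx⟩ := hK ⟨A.1ᶜ, A.2.isOpen_compl⟩ (fun x hxK hxA => hAK ⟨x, hxA, hxK⟩) A hA
  exact hx hxA

theorem Consonant.closedTransversals_compactTransversals (hX : Consonant X)
    (𝒦 : UpperPS (LowerPS X)) : closedTransversals (compactTransversals 𝒦.1) = 𝒦.1 := by
  refine Subset.antisymm (fun A hA => ?_) fun A hA K hK => hK A hA
  by_contra hA𝒦
  obtain ⟨K, hK, hKA⟩ := (hX.compactTransversals_inter_box_nonempty_iff 𝒦 A.2.isOpen_compl).2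
    (𝒦.subset_dia_compl_of_notMem hA𝒦)
  obtain ⟨x, hxA, hxK⟩ := hA K hK
  exact hKA hxK hxA

theorem continuous_of_coe_eq_closedTransversals
    {σ : LowerPS (UpperPS X) → UpperPS (LowerPS X)}
    (hσ : ∀ 𝒜, (σ 𝒜).1 = closedTransversals 𝒜.1) : Continuous σ := by
  refine continuous_of_isOpen_preimage_box (s := {S | ∃ U, IsOpen U ∧ S = dia U}) rfl
    ⟨∅, isOpen_empty, dia_empty.symm⟩ ?_ ?_
  · rintro _ ⟨U, hU, rfl⟩ _ ⟨V, hV, rfl⟩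
    exact ⟨U ∪ V, hU.union hV, (dia_union U V).symm⟩
  · rintro _ ⟨U, hU, rfl⟩
    have hpre : σ ⁻¹' box (dia U) = diaBox U := by
      ext 𝒜
      exact (hσ 𝒜 ▸ closedTransversals_subset_dia_iff hU :)
    exact hpre ▸ isOpen_diaBox hU

theorem Consonant.continuous_of_coe_eq_compactTransversals (hX : Consonant X)
    {τ : UpperPS (LowerPS X) → LowerPS (UpperPS X)}
    (hτ : ∀ 𝒦, (τ 𝒦).1 = compactTransversals 𝒦.1) : Continuous τ := by
  refine continuous_generateFrom_iff.2 ?_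
  rintro _ ⟨𝒱, h𝒱, rfl⟩
  refine isOpen_iff_forall_mem_open.2 fun 𝒦 ⟨K, hKτ, hK𝒱⟩ => ?_
  obtain ⟨U, hU, hKU, hU𝒱⟩ := exists_box_subset h𝒱 hK𝒱
  refine ⟨boxDia U, fun 𝒦' h𝒦' => ?_, isOpen_boxDia hU,
    (hX.compactTransversals_inter_box_nonempty_iff 𝒦 hU).1 ⟨K, hτ 𝒦 ▸ hKτ, hKU⟩⟩
  obtain ⟨K', hK'τ, hK'U⟩ := (hX.compactTransversals_inter_box_nonempty_iff 𝒦' hU).2 h𝒦'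
  exact ⟨K', (hτ 𝒦').symm ▸ hK'τ, hU𝒱 hK'U⟩

end

/-- If `X` is consonant then `A(K(X))` and `K(A(X))` are homeomorphic via `σ`, with
inverse `τ`. -/
theorem consonant_AK_KA_homeomorph (X : Type*) [TopologicalSpace X]
    (hcons : Consonant X)
    (σ : LowerPS (UpperPS X) → UpperPS (LowerPS X))
    (hσ : ∀ 𝒜, (σ 𝒜).1 =
        {A : LowerPS X | ∀ K ∈ 𝒜.1, (A.1 ∩ (K : UpperPS X).1).Nonempty})
    (τ : UpperPS (LowerPS X) → LowerPS (UpperPS X))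
    (hτ : ∀ 𝒦, (τ 𝒦).1 =
        {K : UpperPS X | ∀ A ∈ 𝒦.1, ((A : LowerPS X).1 ∩ K.1).Nonempty}) :
    ∃ h : LowerPS (UpperPS X) ≃ₜ UpperPS (LowerPS X),
      (∀ 𝒜, h 𝒜 = σ 𝒜) ∧ ∀ 𝒦, h.symm 𝒦 = τ 𝒦 := by
  have hσ' : ∀ 𝒜, (σ 𝒜).1 = closedTransversals 𝒜.1 := hσ
  have hτ' : ∀ 𝒦, (τ 𝒦).1 = compactTransversals 𝒦.1 := hτ
  let e : LowerPS (UpperPS X) ≃ UpperPS (LowerPS X) :=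
    { toFun := σ
      invFun := τ
      left_inv := fun 𝒜 => Subtype.ext <| by
        rw [hτ', hσ', compactTransversals_closedTransversals 𝒜.2]
      right_inv := fun 𝒦 => Subtype.ext <| by
        rw [hσ', hτ', hcons.closedTransversals_compactTransversals] }
  exact ⟨⟨e, continuous_of_coe_eq_closedTransversals hσ',
    hcons.continuous_of_coe_eq_compactTransversals hτ'⟩, fun _ => rfl, fun _ => rfl⟩
end

section
/- For a quasi-Polish space X, the following are equivalent: (1) X is locally compact; (2) O(X) with the Scott topology is quasi-Polish; (3) O(X) with the Scott topology is countably based. -/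
open Set Topology

/-! ### Part A: the Scott topology on `Set ℕ` -/

section SetNat

/-- basic open set of `P(ω)` -/
def bas (F : Finset ℕ) : Set (Set ℕ) := {x : Set ℕ | ↑F ⊆ x}

lemma isOpen_bas (F : Finset ℕ) : IsOpen (bas F) :=
  TopologicalSpace.GenerateOpen.basic _ ⟨F, rfl⟩

lemma bas_mono {F G : Finset ℕ} (h : F ⊆ G) : bas G ⊆ bas F :=
  fun _ hx => Set.Subset.trans (by exact_mod_cast h) hx

lemma bas_empty : bas (∅ : Finset ℕ) = Set.univ := by
  ext x; simp [bas]

lemma bas_union (F G : Finset ℕ) : bas (F ∪ G) = bas F ∩ bas G := by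
  ext x; simp only [bas, Set.mem_setOf_eq, Set.mem_inter_iff, Finset.coe_union,
    Set.union_subset_iff]

lemma exists_bas_subset {V : Set (Set ℕ)} (hV : IsOpen V) {x : Set ℕ} (hx : x ∈ V) :
    ∃ F : Finset ℕ, ↑F ⊆ x ∧ bas F ⊆ V := by
  have hV' : TopologicalSpace.GenerateOpen
      {S | ∃ F : Finset ℕ, S = {x : Set ℕ | ↑F ⊆ x}} V := hV
  clear hV
  induction hV' with
  | basic s hs => obtain ⟨F, rfl⟩ := hs; exact ⟨F, hx, fun y hy => hy⟩
  | univ => exact ⟨∅, by simp, by rw [bas_empty]⟩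
  | inter s t _ _ ihs iht =>
      obtain ⟨F, hF, hFs⟩ := ihs hx.1
      obtain ⟨G, hG, hGt⟩ := iht hx.2
      exact ⟨F ∪ G, by rw [Finset.coe_union]; exact Set.union_subset hF hG,
        by rw [bas_union]; exact fun y hy => ⟨hFs hy.1, hGt hy.2⟩⟩
  | sUnion S _ ih =>
      obtain ⟨t, ht, hxt⟩ := hx
      obtain ⟨F, hF, hFt⟩ := ih t ht hxt
      exact ⟨F, hF, fun y hy => ⟨t, ht, hFt hy⟩⟩

instance : SecondCountableTopology (Set ℕ) := by
  refine ⟨⟨Set.range bas, Set.countable_range _, ?_⟩⟩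
  show (TopologicalSpace.generateFrom _ : TopologicalSpace (Set ℕ)) = _
  congr 1
  ext s
  constructor
  · rintro ⟨F, rfl⟩; exact ⟨F, rfl⟩
  · rintro ⟨F, rfl⟩; exact ⟨F, rfl⟩

end SetNat

/-! ### Part B: generic lemmas on `OpensT` -/

section OpensTBasic

variable {X : Type*} [TopologicalSpace X]

lemma OpensT.le_iff {U V : OpensT X} : U ≤ V ↔ U.1 ⊆ V.1 := Iff.rfl

lemma isScottOpen_sUnion {𝒮 : Set (Set (OpensT X))} (h : ∀ s ∈ 𝒮, IsScottOpen s) :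
    IsScottOpen (⋃₀ 𝒮) := by
  constructor
  · rintro a b hab ⟨s, hs, has⟩; exact ⟨s, hs, (h s hs).1 hab has⟩
  · rintro d hd hdir a hlub ⟨s, hs, has⟩
    obtain ⟨b, hbd, hbs⟩ := (h s hs).2 d hd hdir a hlub has
    exact ⟨b, hbd, s, hs, hbs⟩

lemma isScottOpen_inter {s t : Set (OpensT X)} (hs : IsScottOpen s) (ht : IsScottOpen t) :
    IsScottOpen (s ∩ t) := by
  constructor
  · rintro a b hab ⟨h1, h2⟩; exact ⟨hs.1 hab h1, ht.1 hab h2⟩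
  · rintro d hd hdir a hlub ⟨h1, h2⟩
    obtain ⟨b1, hb1d, hb1⟩ := hs.2 d hd hdir a hlub h1
    obtain ⟨b2, hb2d, hb2⟩ := ht.2 d hd hdir a hlub h2
    obtain ⟨b3, hb3d, h13, h23⟩ := hdir b1 hb1d b2 hb2d
    exact ⟨b3, hb3d, hs.1 h13 hb1, ht.1 h23 hb2⟩

lemma isScottOpen_univ : IsScottOpen (Set.univ : Set (OpensT X)) := by
  constructor
  · intro a b _ _; trivial
  · rintro d hd _ a _ _; exact ⟨hd.some, hd.some_mem, trivial⟩

/-- every open set of `OpensT X` is Scott open -/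
lemma isScottOpen_of_isOpen {H : Set (OpensT X)} (hH : IsOpen H) : IsScottOpen H := by
  have hH' : TopologicalSpace.GenerateOpen {U : Set (OpensT X) | IsScottOpen U} H := hH
  clear hH
  induction hH' with
  | basic s hs => exact hs
  | univ => exact isScottOpen_univ
  | inter s t _ _ ihs iht => exact isScottOpen_inter ihs iht
  | sUnion S _ ih => exact isScottOpen_sUnion ih

lemma isOpen_of_isScottOpen {H : Set (OpensT X)} (hH : IsScottOpen H) : IsOpen H :=
  TopologicalSpace.GenerateOpen.basic _ hH

/-- the lub of a set of opens is the union -/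
lemma OpensT.isLUB_eq_union {d : Set (OpensT X)} {A : OpensT X} (h : IsLUB d A) :
    A.1 = ⋃ V ∈ d, (V : OpensT X).1 := by
  apply Set.Subset.antisymm
  · have : A ≤ ⟨⋃ V ∈ d, (V : OpensT X).1, isOpen_biUnion fun V _ => V.2⟩ :=
      h.2 fun V hV => Set.subset_biUnion_of_mem (u := fun V : OpensT X => V.1) hV
    exact this
  · exact Set.iUnion₂_subset fun V hV => h.1 hV

end OpensTBasic
/-! ### Part B2: saturation, `▽K`, Scott extraction -/

section OpensTBasic2

variable {X : Type*} [TopologicalSpace X]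

/-- saturation of a set -/
def satur (A : Set X) : Set X := ⋂₀ {U : Set X | IsOpen U ∧ A ⊆ U}

lemma subset_satur (A : Set X) : A ⊆ satur A := fun x hx _ ⟨_, hAU⟩ => hAU hx

lemma satur_subset {A U : Set X} (hU : IsOpen U) (hAU : A ⊆ U) : satur A ⊆ U :=
  fun _ hx => hx U ⟨hU, hAU⟩

lemma satur_satur (A : Set X) : satur A = ⋂₀ {U : Set X | IsOpen U ∧ satur A ⊆ U} := by
  apply Set.Subset.antisymm
  · intro x hx U hU
    exact hU.2 hx
  · intro x hx U hU
    exact hx U ⟨hU.1, satur_subset hU.1 hU.2⟩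

lemma isCompact_satur {A : Set X} (hA : IsCompact A) : IsCompact (satur A) := by
  refine isCompact_of_finite_subcover fun {ι} U hU hcov => ?_
  obtain ⟨t, ht⟩ := hA.elim_finite_subcover U hU ((subset_satur A).trans hcov)
  exact ⟨t, satur_subset (isOpen_biUnion fun i _ => hU i) ht⟩

/-- a finite subset of a nonempty directed set has an upper bound in it -/
lemma directedOn_finite_bound {α : Type*} [Preorder α] {d : Set α}
    (hdir : DirectedOn (· ≤ ·) d) (hne : d.Nonempty) {t : Set α} (ht : t.Finite) :
    t ⊆ d → ∃ b ∈ d, ∀ a ∈ t, a ≤ b := by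
  refine Set.Finite.induction_on _ ht (fun _ => ⟨hne.some, hne.some_mem, by simp⟩) ?_
  intro a s _ _ ih hts
  obtain ⟨b, hbd, hb⟩ := ih ((Set.subset_insert a s).trans hts)
  obtain ⟨c, hcd, hac, hbc⟩ := hdir a (hts (Set.mem_insert a s)) b hbd
  refine ⟨c, hcd, fun x hx => ?_⟩
  rcases Set.mem_insert_iff.1 hx with rfl | hx
  · exact hac
  · exact (hb x hx).trans hbc

/-- `▽K` is Scott open for compact `K` -/
lemma isScottOpen_nabla {K : Set X} (hK : IsCompact K) :
    IsScottOpen {V : OpensT X | K ⊆ V.1} := by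
  constructor
  · intro a b hab ha; exact Set.Subset.trans ha (OpensT.le_iff.mp hab)
  · intro d hd hdir A hlub hA
    have hcov : K ⊆ ⋃ V ∈ d, (V : OpensT X).1 := by
      rw [← OpensT.isLUB_eq_union hlub]; exact hA
    -- compactness: finite subcover, then directedness
    obtain ⟨t, ht⟩ := hK.elim_finite_subcover (fun V : d => (V : OpensT X).1)
      (fun V => (V : OpensT X).2) (by
        intro x hx
        obtain ⟨V, hVd, hxV⟩ := Set.mem_iUnion₂.1 (hcov hx)
        exact Set.mem_iUnion.2 ⟨⟨V, hVd⟩, hxV⟩)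
    obtain ⟨b, hbd, hb⟩ := directedOn_finite_bound hdir ⟨hd.some, hd.some_mem⟩
      (t.finite_toSet.image (fun V : d => (V : OpensT X)))
      (by rintro _ ⟨V, _, rfl⟩; exact V.2)
    refine ⟨b, hbd, fun x hx => ?_⟩
    obtain ⟨V, hVt, hxV⟩ := Set.mem_iUnion₂.1 (ht hx)
    exact OpensT.le_iff.mp (hb _ (Set.mem_image_of_mem _ hVt)) hxV

/-- Scott extraction: if a union of a family of opens is in a Scott-open `H`,
some finite subfamily's union is in `H`. -/
lemma scott_extract {H : Set (OpensT X)} (hH : IsScottOpen H)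
    {γ : Type*} (I : Set γ) (c : γ → OpensT X) (A : OpensT X)
    (hA : A.1 = ⋃ i ∈ I, (c i).1) (hAH : A ∈ H) :
    ∃ J : Set γ, J ⊆ I ∧ J.Finite ∧
      ∀ B : OpensT X, B.1 = ⋃ i ∈ J, (c i).1 → B ∈ H := by
  classical
  set d : Set (OpensT X) :=
    {V | ∃ J : Set γ, J ⊆ I ∧ J.Finite ∧ V.1 = ⋃ i ∈ J, (c i).1} with hd
  have hdne : d.Nonempty := ⟨⟨∅, isOpen_empty⟩, ∅, by simp⟩
  have hdir : DirectedOn (· ≤ ·) d := by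
    rintro V ⟨J1, hJ1, hf1, hV⟩ W ⟨J2, hJ2, hf2, hW⟩
    refine ⟨⟨V.1 ∪ W.1, V.2.union W.2⟩, ⟨J1 ∪ J2, Set.union_subset hJ1 hJ2, hf1.union hf2, ?_⟩,
      Set.subset_union_left, Set.subset_union_right⟩
    simp only [hV, hW, Set.biUnion_union]
  have hlub : IsLUB d A := by
    constructor
    · rintro V ⟨J, hJ, _, hV⟩
      show V.1 ⊆ A.1
      rw [hV, hA]
      exact Set.biUnion_subset_biUnion_left hJ
    · intro W hW
      show A.1 ⊆ W.1
      rw [hA]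
      refine Set.iUnion₂_subset fun i hi => ?_
      exact hW ⟨{i}, by simpa using hi, Set.finite_singleton i, by simp⟩
  obtain ⟨B, ⟨J, hJ, hfin, hB⟩, hBH⟩ := hH.2 d hdne hdir A hlub hAH
  refine ⟨J, hJ, hfin, fun B' hB' => ?_⟩
  have : B = B' := Subtype.ext (hB ▸ hB' ▸ rfl)
  exact this ▸ hBH

end OpensTBasic2
/-! ### Part C1: König's lemma for finitely branching level structures -/

section Koenig

/-- iterated parent: `ancF pm k m G` is the level-`m` ancestor of a node `G` at level `m+k`. -/
def ancF (pm : ℕ → Finset ℕ → Finset ℕ) : ℕ → ℕ → Finset ℕ → Finset ℕ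
  | 0, _, G => G
  | (k+1), m, G => pm (m+1) (ancF pm k (m+1) G)

/-- a viable node: bad, and with bad descendants at every depth -/
def Viable (L : ℕ → Set (Finset ℕ)) (Bad : ℕ → Finset ℕ → Prop)
    (pm : ℕ → Finset ℕ → Finset ℕ) (m : ℕ) (F : Finset ℕ) : Prop :=
  F ∈ L m ∧ Bad m F ∧ ∀ k, ∃ G, G ∈ L (m + k) ∧ Bad (m + k) G ∧ ancF pm k m G = F

variable {pm : ℕ → Finset ℕ → Finset ℕ} {L : ℕ → Set (Finset ℕ)} {Bad : ℕ → Finset ℕ → Prop}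

lemma ancF_comp (pm : ℕ → Finset ℕ → Finset ℕ) :
    ∀ j k m G, ancF pm (j + k) m G = ancF pm j m (ancF pm k (m + j) G) := by
  intro j
  induction j with
  | zero => intro k m G; rw [Nat.zero_add]; rfl
  | succ j ih =>
      intro k m G
      rw [show j + 1 + k = (j + k) + 1 from by omega]
      show pm (m+1) (ancF pm (j + k) (m+1) G) = pm (m+1) (ancF pm j (m+1) (ancF pm k (m + (j+1)) G))
      rw [ih k (m+1) G, show m + 1 + j = m + (j + 1) from by omega]

lemma ancF_spec (hpm : ∀ n, ∀ G ∈ L (n+1), pm (n+1) G ∈ L n)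
    (hBadUp : ∀ n G, G ∈ L (n+1) → Bad (n+1) G → Bad n (pm (n+1) G)) :
    ∀ k m G, G ∈ L (m + k) → Bad (m + k) G →
      ancF pm k m G ∈ L m ∧ Bad m (ancF pm k m G) := by
  intro k
  induction k with
  | zero => intro m G h1 h2; exact ⟨h1, h2⟩
  | succ k ih =>
      intro m G h1 h2
      rw [show m + (k + 1) = (m + 1) + k from by omega] at h1 h2
      obtain ⟨hL, hB⟩ := ih (m+1) G h1 h2
      exact ⟨hpm m _ hL, hBadUp m _ hL hB⟩

lemma exists_infinite_fiber_of_finite {v : ℕ → Finset ℕ} {A : Set (Finset ℕ)}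
    (hA : A.Finite) (hv : ∀ k, v k ∈ A) : ∃ F ∈ A, {k | v k = F}.Infinite := by
  by_contra hcon
  push_neg at hcon
  have h1 : (Set.univ : Set ℕ) ⊆ ⋃ F ∈ A, {k | v k = F} := fun k _ =>
    Set.mem_biUnion (hv k) rfl
  exact Set.infinite_univ
    (Set.Finite.subset (hA.biUnion fun F hF => (hcon F hF)) h1)

lemma infinite_nat_exists_ge {s : Set ℕ} (hs : s.Infinite) (k : ℕ) : ∃ m ∈ s, k ≤ m := by
  by_contra hcon
  push_neg at hcon
  exact hs (Set.Finite.subset (Set.finite_Iio k) fun m hm => hcon m hm)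

lemma viable_zero (hfin : ∀ n, (L n).Finite)
    (hpm : ∀ n, ∀ G ∈ L (n+1), pm (n+1) G ∈ L n)
    (hBadUp : ∀ n G, G ∈ L (n+1) → Bad (n+1) G → Bad n (pm (n+1) G))
    (hBadNE : ∀ n, ∃ F ∈ L n, Bad n F) : ∃ F, Viable L Bad pm 0 F := by
  have hw : ∀ n, ∃ F, F ∈ L n ∧ Bad n F := by
    intro n; obtain ⟨F, h1, h2⟩ := hBadNE n; exact ⟨F, h1, h2⟩
  choose w hw1 hw2 using hw
  have hv0 : ∀ k, ancF pm k 0 (w k) ∈ L 0 ∧ Bad 0 (ancF pm k 0 (w k)) := fun k =>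
    ancF_spec hpm hBadUp k 0 (w k) (by rw [Nat.zero_add]; exact hw1 k)
      (by rw [Nat.zero_add]; exact hw2 k)
  obtain ⟨F, hFL, hI⟩ := exists_infinite_fiber_of_finite (hfin 0) (fun k => (hv0 k).1)
  refine ⟨F, hFL, ?_, ?_⟩
  · obtain ⟨k, hk⟩ := hI.nonempty
    exact hk ▸ (hv0 k).2
  · intro k
    obtain ⟨k', hk'I, hkk'⟩ := infinite_nat_exists_ge hI k
    refine ⟨ancF pm (k' - k) (0 + k) (w k'), ?_, ?_, ?_⟩
    · exact (ancF_spec hpm hBadUp (k' - k) (0 + k) (w k')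
        (by rw [show 0 + k + (k' - k) = k' from by omega]; exact hw1 k')
        (by rw [show 0 + k + (k' - k) = k' from by omega]; exact hw2 k')).1
    · exact (ancF_spec hpm hBadUp (k' - k) (0 + k) (w k')
        (by rw [show 0 + k + (k' - k) = k' from by omega]; exact hw1 k')
        (by rw [show 0 + k + (k' - k) = k' from by omega]; exact hw2 k')).2
    · have hcomp := ancF_comp pm k (k' - k) 0 (w k')
      rw [show k + (k' - k) = k' from by omega] at hcomp
      rw [← hcomp]
      exact hk'I
  
lemma viable_step (hfin : ∀ n, (L n).Finite)
    (hpm : ∀ n, ∀ G ∈ L (n+1), pm (n+1) G ∈ L n)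
    (hBadUp : ∀ n G, G ∈ L (n+1) → Bad (n+1) G → Bad n (pm (n+1) G)) :
    ∀ m F, Viable L Bad pm m F → ∃ G, Viable L Bad pm (m+1) G ∧ pm (m+1) G = F := by
  intro m F hv
  obtain ⟨hFL, hFB, hFk⟩ := hv
  have hu : ∀ k, ∃ G, G ∈ L (m + (k+1)) ∧ Bad (m + (k+1)) G ∧ ancF pm (k+1) m G = F :=
    fun k => hFk (k+1)
  choose u hu1 hu2 hu3 using hu
  have hc : ∀ k, ancF pm k (m+1) (u k) ∈ L (m+1) ∧ Bad (m+1) (ancF pm k (m+1) (u k)) :=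
    fun k => ancF_spec hpm hBadUp k (m+1) (u k)
      (by rw [show m + 1 + k = m + (k+1) from by omega]; exact hu1 k)
      (by rw [show m + 1 + k = m + (k+1) from by omega]; exact hu2 k)
  have hpmc : ∀ k, pm (m+1) (ancF pm k (m+1) (u k)) = F := fun k => hu3 k
  obtain ⟨G, hGL, hI⟩ := exists_infinite_fiber_of_finite (hfin (m+1)) (fun k => (hc k).1)
  obtain ⟨k0, hk0⟩ := hI.nonempty
  refine ⟨G, ⟨hGL, hk0 ▸ (hc k0).2, ?_⟩, hk0 ▸ hpmc k0⟩
  intro j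
  obtain ⟨k, hkI, hjk⟩ := infinite_nat_exists_ge hI j
  refine ⟨ancF pm (k - j) (m + 1 + j) (u k), ?_, ?_, ?_⟩
  · exact (ancF_spec hpm hBadUp (k - j) (m+1+j) (u k)
      (by rw [show m + 1 + j + (k - j) = m + (k+1) from by omega]; exact hu1 k)
      (by rw [show m + 1 + j + (k - j) = m + (k+1) from by omega]; exact hu2 k)).1
  · exact (ancF_spec hpm hBadUp (k - j) (m+1+j) (u k)
      (by rw [show m + 1 + j + (k - j) = m + (k+1) from by omega]; exact hu1 k)
      (by rw [show m + 1 + j + (k - j) = m + (k+1) from by omega]; exact hu2 k)).2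
  · have hcomp := ancF_comp pm j (k - j) (m+1) (u k)
    rw [show j + (k - j) = k from by omega] at hcomp
    rw [← hcomp]
    exact hkI

lemma koenig (hfin : ∀ n, (L n).Finite)
    (hpm : ∀ n, ∀ G ∈ L (n+1), pm (n+1) G ∈ L n)
    (hBadUp : ∀ n G, G ∈ L (n+1) → Bad (n+1) G → Bad n (pm (n+1) G))
    (hBadNE : ∀ n, ∃ F ∈ L n, Bad n F) :
    ∃ b : ℕ → Finset ℕ, (∀ n, b n ∈ L n ∧ Bad n (b n)) ∧
      ∀ n, pm (n+1) (b (n+1)) = b n := by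
  classical
  have h0 := viable_zero hfin hpm hBadUp hBadNE
  have hstep := viable_step (Bad := Bad) hfin hpm hBadUp
  let b' : ∀ n : ℕ, {F // Viable L Bad pm n F} := fun n =>
    Nat.rec ⟨h0.choose, h0.choose_spec⟩
      (fun n p => ⟨(hstep n p.1 p.2).choose, ((hstep n p.1 p.2).choose_spec).1⟩) n
  refine ⟨fun n => (b' n).1, fun n => ⟨(b' n).2.1, (b' n).2.2.1⟩,
    fun n => ((hstep n (b' n).1 (b' n).2).choose_spec).2⟩

end Koenig
/-! ### Part C2: quasi-Polish subspaces of `P(ω)` are consonant -/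

section ConsonanceCore

variable (S : Set (Set ℕ))

/-- trace of a basic open on the subspace -/
def trc (F : Finset ℕ) : Set ↥S := Subtype.val ⁻¹' bas F

lemma isOpen_trc (F : Finset ℕ) : IsOpen (trc S F) :=
  (isOpen_bas F).preimage continuous_subtype_val

/-- union of traces over a level -/
def uA (A : Set (Finset ℕ)) : OpensT ↥S :=
  ⟨⋃ F ∈ A, trc S F, isOpen_biUnion fun F _ => isOpen_trc S F⟩

variable {S}

lemma trc_mono {F G : Finset ℕ} (h : F ⊆ G) : trc S G ⊆ trc S F :=
  fun _ hx => bas_mono h hx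

lemma subtype_open_iff {V : Set ↥S} (hV : IsOpen V) :
    ∃ V' : Set (Set ℕ), IsOpen V' ∧ V = Subtype.val ⁻¹' V' := by
  obtain ⟨V', hV', h⟩ := isOpen_induced_iff.1 hV
  exact ⟨V', hV', h.symm⟩

variable {P Q : ℕ → Set (Set ℕ)}
  (hP : ∀ k, IsOpen (P k)) (hQ : ∀ k, IsOpen (Q k))
  (hS : ∀ y, y ∈ S ↔ ∀ k, y ∈ P k → y ∈ Q k)

/-- children of a node `F` at stage `n` -/
def childSet (P Q : ℕ → Set (Set ℕ)) (n : ℕ) (F : Finset ℕ) : Set (Finset ℕ) :=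
  {G | F ⊆ G ∧ ∀ k ≤ n, bas F ⊆ P k → bas G ⊆ Q k}

include hQ hS in
/-- the traces of the children of `F` cover the trace of `F` -/
lemma trc_eq_union_child (n : ℕ) (F : Finset ℕ) :
    trc S F = ⋃ G ∈ childSet P Q n F, trc S G := by
  classical
  apply Set.Subset.antisymm
  · intro y hy
    have hex : ∀ k, ∃ Gk : Finset ℕ,
        ((k ≤ n ∧ bas F ⊆ P k) → (↑Gk ⊆ y.val ∧ bas Gk ⊆ Q k)) ∧
        (¬(k ≤ n ∧ bas F ⊆ P k) → Gk = ∅) := by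
      intro k
      by_cases hk : k ≤ n ∧ bas F ⊆ P k
      · have hyQ : y.val ∈ Q k := by
          have h1 : (y : Set ℕ) ∈ P k := hk.2 hy
          exact (hS y.val).1 y.2 k h1
        obtain ⟨Gk, h1, h2⟩ := exists_bas_subset (hQ k) hyQ
        exact ⟨Gk, fun _ => ⟨h1, h2⟩, fun h => absurd hk h⟩
      · exact ⟨∅, fun h => absurd h hk, fun _ => rfl⟩
    choose g hg1 hg2 using hex
    set G : Finset ℕ := F ∪ (Finset.range (n+1)).biUnion g with hGdef
    have hsub : ∀ k ≤ n, g k ⊆ G := fun k hk => by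
      rw [hGdef]
      exact (Finset.subset_biUnion_of_mem g (Finset.mem_range.2 (by omega))).trans
        Finset.subset_union_right
    have hGy : ↑G ⊆ y.val := by
      intro a ha
      rw [hGdef] at ha
      simp only [Finset.coe_union, Set.mem_union, Finset.coe_biUnion, Finset.mem_range,
        Set.mem_iUnion, Finset.mem_coe] at ha
      rcases ha with ha | ⟨k, hk, hak⟩
      · exact hy ha
      · by_cases hcond : k ≤ n ∧ bas F ⊆ P k
        · exact (hg1 k hcond).1 hak
        · rw [hg2 k hcond] at hak; exact absurd hak (Finset.notMem_empty a)
    have hGchild : G ∈ childSet P Q n F := by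
      refine ⟨by rw [hGdef]; exact Finset.subset_union_left, fun k hk hFP => ?_⟩
      have h1 : bas G ⊆ bas (g k) := bas_mono (hsub k hk)
      exact h1.trans (hg1 k ⟨hk, hFP⟩).2
    exact Set.mem_biUnion hGchild hGy
  · refine Set.iUnion₂_subset fun G hG => trc_mono hG.1

end ConsonanceCore
section ConsonanceMain

variable {S : Set (Set ℕ)} {P Q : ℕ → Set (Set ℕ)}

lemma step_ex (hP : ∀ k, IsOpen (P k)) (hQ : ∀ k, IsOpen (Q k))
    (hS : ∀ y, y ∈ S ↔ ∀ k, y ∈ P k → y ∈ Q k)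
    {H : Set (OpensT ↥S)} (hH : IsScottOpen H) (n : ℕ)
    (A : Set (Finset ℕ)) (hA : uA S A ∈ H) :
    ∃ (B : Set (Finset ℕ)) (par : Finset ℕ → Finset ℕ), B.Finite ∧ uA S B ∈ H ∧
      ∀ G ∈ B, par G ∈ A ∧ par G ⊆ G ∧ ∀ k ≤ n, bas (par G) ⊆ P k → bas G ⊆ Q k := by
  classical
  set I : Set (Finset ℕ × Finset ℕ) := {p | p.1 ∈ A ∧ p.2 ∈ childSet P Q n p.1} with hI
  set c : Finset ℕ × Finset ℕ → OpensT ↥S := fun p => ⟨trc S p.2, isOpen_trc S p.2⟩ with hc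
  have hAeq : (uA S A).1 = ⋃ p ∈ I, (c p).1 := by
    apply Set.Subset.antisymm
    · intro y hy
      obtain ⟨F, hF, hyF⟩ := Set.mem_iUnion₂.1 hy
      rw [trc_eq_union_child hQ hS n F] at hyF
      obtain ⟨G, hG, hyG⟩ := Set.mem_iUnion₂.1 hyF
      exact Set.mem_iUnion₂.2 ⟨(F, G), ⟨hF, hG⟩, hyG⟩
    · rintro y hy
      obtain ⟨⟨F, G⟩, ⟨hF, hG⟩, hyG⟩ := Set.mem_iUnion₂.1 hy
      exact Set.mem_iUnion₂.2 ⟨F, hF, trc_mono hG.1 hyG⟩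
  obtain ⟨J, hJI, hJfin, hJ⟩ := scott_extract hH I c (uA S A) hAeq hA
  refine ⟨Prod.snd '' J, fun G => if h : ∃ F, (F, G) ∈ J then h.choose else ∅,
    hJfin.image _, ?_, ?_⟩
  · apply hJ
    apply Set.Subset.antisymm
    · intro y hy
      obtain ⟨G, ⟨p, hpJ, rfl⟩, hyG⟩ := Set.mem_iUnion₂.1 hy
      exact Set.mem_iUnion₂.2 ⟨p, hpJ, hyG⟩
    · intro y hy
      obtain ⟨p, hpJ, hyp⟩ := Set.mem_iUnion₂.1 hy
      exact Set.mem_iUnion₂.2 ⟨p.2, ⟨p, hpJ, rfl⟩, hyp⟩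
  · rintro G ⟨⟨F, G'⟩, hpJ, rfl⟩
    have hex : ∃ F, (F, G') ∈ J := ⟨F, hpJ⟩
    simp only [dif_pos hex]
    have hmem : (hex.choose, G') ∈ I := hJI hex.choose_spec
    exact ⟨hmem.1, hmem.2.1, hmem.2.2⟩

lemma root_ex {H : Set (OpensT ↥S)} (hH : IsScottOpen H) (U : OpensT ↥S) (hU : U ∈ H) :
    ∃ A : Set (Finset ℕ), A.Finite ∧ uA S A ∈ H ∧ ∀ F ∈ A, trc S F ⊆ U.1 := by
  classical
  obtain ⟨V', hV', hUV⟩ := subtype_open_iff U.2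
  set I : Set (Finset ℕ) := {F | bas F ⊆ V'} with hI
  set c : Finset ℕ → OpensT ↥S := fun F => ⟨trc S F, isOpen_trc S F⟩ with hc
  have hAeq : U.1 = ⋃ F ∈ I, (c F).1 := by
    apply Set.Subset.antisymm
    · intro y hy
      have : y.val ∈ V' := by rw [hUV] at hy; exact hy
      obtain ⟨F, hF, hFV⟩ := exists_bas_subset hV' this
      exact Set.mem_iUnion₂.2 ⟨F, hFV, hF⟩
    · refine Set.iUnion₂_subset fun F hF => ?_
      rw [hUV]
      exact Set.preimage_mono hF
  obtain ⟨J, hJI, hJfin, hJ⟩ := scott_extract hH I c U hAeq hU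
  refine ⟨J, hJfin, hJ _ ?_, fun F hF => ?_⟩
  · apply Set.Subset.antisymm <;>
      · intro y hy
        obtain ⟨F, hF, hyF⟩ := Set.mem_iUnion₂.1 hy
        exact Set.mem_iUnion₂.2 ⟨F, hF, hyF⟩
  · rw [hUV]
    exact Set.preimage_mono (hJI hF)

theorem consonant_pi02 (hP : ∀ k, IsOpen (P k)) (hQ : ∀ k, IsOpen (Q k))
    (hS : ∀ y, y ∈ S ↔ ∀ k, y ∈ P k → y ∈ Q k) : Consonant ↥S := by
  classical
  intro H hH U hU
  obtain ⟨A₀, hA₀fin, hA₀H, hA₀U⟩ := root_ex hH U hU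
  -- totalized step function
  have step' : ∀ (n : ℕ) (A : Set (Finset ℕ)),
      ∃ Bp : Set (Finset ℕ) × (Finset ℕ → Finset ℕ), uA S A ∈ H →
        (Bp.1.Finite ∧ uA S Bp.1 ∈ H ∧
          ∀ G ∈ Bp.1, Bp.2 G ∈ A ∧ Bp.2 G ⊆ G ∧
            ∀ k ≤ n, bas (Bp.2 G) ⊆ P k → bas G ⊆ Q k) := by
    intro n A
    by_cases hA : uA S A ∈ H
    · obtain ⟨B, par, h1, h2, h3⟩ := step_ex hP hQ hS hH n A hA
      exact ⟨(B, par), fun _ => ⟨h1, h2, h3⟩⟩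
    · exact ⟨(∅, fun _ => ∅), fun h => absurd h hA⟩
  choose stp hstp using step'
  set seq : ℕ → Set (Finset ℕ) × (Finset ℕ → Finset ℕ) := fun n =>
    Nat.rec (A₀, fun _ => ∅) (fun n t => stp n t.1) n with hseq
  set L : ℕ → Set (Finset ℕ) := fun n => (seq n).1 with hL
  set pmf : ℕ → Finset ℕ → Finset ℕ := fun n => (seq n).2 with hpmf
  have hseqsucc : ∀ n, seq (n + 1) = stp n (L n) := fun n => rfl
  have inv : ∀ n, (L n).Finite ∧ uA S (L n) ∈ H := by
    intro n
    induction n with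
    | zero => exact ⟨hA₀fin, hA₀H⟩
    | succ n ih =>
        exact ⟨(hstp n (L n) ih.2).1, (hstp n (L n) ih.2).2.1⟩
  have cross : ∀ n, ∀ G ∈ L (n + 1), pmf (n+1) G ∈ L n ∧ pmf (n+1) G ⊆ G ∧
      ∀ k ≤ n, bas (pmf (n+1) G) ⊆ P k → bas G ⊆ Q k := by
    intro n G hG
    exact (hstp n (L n) (inv n).2).2.2 G hG
  -- the compact set
  set Kset : Set ↥S := {y | ∀ n, ∃ F ∈ L n, ↑F ⊆ y.val} with hKset
  have hKW : ∀ n, Kset ⊆ (uA S (L n)).1 := by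
    intro n y hy
    obtain ⟨F, hF, hFy⟩ := hy n
    exact Set.mem_iUnion₂.2 ⟨F, hF, hFy⟩
  -- branch construction for any "bad" predicate
  have branch : ∀ Bad : ℕ → Finset ℕ → Prop,
      (∀ n G, G ∈ L (n+1) → Bad (n+1) G → Bad n (pmf (n+1) G)) →
      (∀ n, ∃ F ∈ L n, Bad n F) →
      ∃ (x : Set ℕ) (hxS : x ∈ S), (⟨x, hxS⟩ : ↥S) ∈ Kset ∧
        ∀ V' : Set (Set ℕ), IsOpen V' → x ∈ V' →
          ∃ F n, Bad n F ∧ trc S F ⊆ (Subtype.val ⁻¹' V' : Set ↥S) := by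
    intro Bad hBadUp hBadNE
    obtain ⟨b, hb, hbpar⟩ := koenig (fun n => (inv n).1)
      (fun n G hG => (cross n G hG).1) hBadUp hBadNE
    have hmono : ∀ n, b n ⊆ b (n+1) := by
      intro n
      have h := (cross n (b (n+1)) (hb (n+1)).1).2.1
      rwa [hbpar n] at h
    have bmono : ∀ n m, n ≤ m → b n ⊆ b m := by
      intro n m hnm
      induction m, hnm using Nat.le_induction with
      | base => exact Finset.Subset.refl _
      | succ m _ ih => exact ih.trans (hmono m)
    set x : Set ℕ := ⋃ n, ((b n : Finset ℕ) : Set ℕ) with hx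
    have sub_x : ∀ n, ((b n : Finset ℕ) : Set ℕ) ⊆ x := fun n =>
      Set.subset_iUnion (fun n => ((b n : Finset ℕ) : Set ℕ)) n
    have hfind : ∀ G : Finset ℕ, ↑G ⊆ x → ∃ n, G ⊆ b n := by
      intro G hGx
      have hex : ∀ a : ℕ, ∃ n, a ∈ G → a ∈ b n := by
        intro a
        by_cases ha : a ∈ G
        · obtain ⟨n, hn⟩ := Set.mem_iUnion.1 (hGx ha)
          exact ⟨n, fun _ => hn⟩
        · exact ⟨0, fun h => absurd h ha⟩
      choose idx hidx using hex
      refine ⟨G.sup idx, fun a ha => ?_⟩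
      exact bmono (idx a) (G.sup idx) (Finset.le_sup ha) (hidx a ha)
    have hxS : x ∈ S := by
      rw [hS]
      intro k hxP
      obtain ⟨F, hFx, hFP⟩ := exists_bas_subset (hP k) hxP
      obtain ⟨n₁, hn₁⟩ := hfind F hFx
      set n := max n₁ k with hn
      have h1 : bas (b n) ⊆ P k := (bas_mono (hn₁.trans (bmono n₁ n (le_max_left _ _)))).trans hFP
      have h2 : bas (b (n+1)) ⊆ Q k := by
        have h := (cross n (b (n+1)) (hb (n+1)).1).2.2 k (le_max_right _ _)
        rw [hbpar n] at h
        exact h h1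
      exact h2 (sub_x (n+1))
    refine ⟨x, hxS, fun n => ⟨b n, (hb n).1, sub_x n⟩, ?_⟩
    intro V' hV' hxV'
    obtain ⟨G, hGx, hGV⟩ := exists_bas_subset hV' hxV'
    obtain ⟨n, hn⟩ := hfind G hGx
    exact ⟨b n, n, (hb n).2, (trc_mono hn).trans (Set.preimage_mono hGV)⟩
  -- compactness of Kset
  have hKcpt : IsCompact Kset := by
    refine isCompact_of_finite_subcover fun {ι} Ucov hUcov hcover => ?_
    by_cases hgood : ∃ n, ∀ F ∈ L n, ∃ t : Finset ι, trc S F ⊆ ⋃ i ∈ t, Ucov i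
    · obtain ⟨n, hn⟩ := hgood
      have claim : ∀ A : Set (Finset ℕ), A.Finite →
          (∀ F ∈ A, ∃ t : Finset ι, trc S F ⊆ ⋃ i ∈ t, Ucov i) →
          ∃ t : Finset ι, (⋃ F ∈ A, trc S F) ⊆ ⋃ i ∈ t, Ucov i := by
        intro A hfin
        refine Set.Finite.induction_on _ hfin (fun _ => ⟨∅, by simp⟩) ?_
        intro F A' _ _ ih hall
        obtain ⟨t1, ht1⟩ := hall F (Set.mem_insert _ _)
        obtain ⟨t2, ht2⟩ := ih fun G hG => hall G (Set.mem_insert_of_mem _ hG)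
        refine ⟨t1 ∪ t2, ?_⟩
        rw [Set.biUnion_insert]
        refine Set.union_subset (ht1.trans ?_) (ht2.trans ?_)
        · exact Set.iUnion₂_subset fun i hi =>
            Set.subset_biUnion_of_mem (Finset.mem_union_left _ hi)
        · exact Set.iUnion₂_subset fun i hi =>
            Set.subset_biUnion_of_mem (Finset.mem_union_right _ hi)
      obtain ⟨t, ht⟩ := claim (L n) (inv n).1 hn
      exact ⟨t, (hKW n).trans ht⟩
    · push_neg at hgood
      obtain ⟨x, hxS, hxK, hxV⟩ := branch
        (fun n F => ¬∃ t : Finset ι, trc S F ⊆ ⋃ i ∈ t, Ucov i)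
        (by
          intro n G hG hBadG hBadpar
          apply hBadG
          obtain ⟨t, ht⟩ := hBadpar
          exact ⟨t, ((trc_mono (cross n G hG).2.1).trans ht)⟩)
        (by
          intro n
          obtain ⟨F, hF, hFbad⟩ := hgood n
          exact ⟨F, hF, not_exists.2 hFbad⟩)
      obtain ⟨i₁, hyU⟩ := Set.mem_iUnion.1 (hcover hxK)
      obtain ⟨V', hV', hUV⟩ := subtype_open_iff (hUcov i₁)
      rw [Set.ext_iff] at hUV
      have hxV' : x ∈ V' := (hUV _).1 hyU
      obtain ⟨F, n, hbad, hsub⟩ := hxV V' hV' hxV'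
      refine absurd ⟨{i₁}, hsub.trans fun y hy => ?_⟩ hbad
      exact Set.mem_biUnion (Finset.mem_singleton_self i₁) ((hUV y).2 hy)
  -- every open neighborhood of Kset is in H
  have hKnbhd : ∀ V : OpensT ↥S, Kset ⊆ V.1 → V ∈ H := by
    intro V hKV
    by_cases hgood : ∃ n, ∀ F ∈ L n, trc S F ⊆ V.1
    · obtain ⟨n, hn⟩ := hgood
      exact hH.1 (OpensT.le_iff.mpr (Set.iUnion₂_subset hn)) (inv n).2
    · push_neg at hgood
      obtain ⟨x, hxS, hxK, hxV⟩ := branch (fun n F => ¬(trc S F ⊆ V.1))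
        (by
          intro n G hG hBadG hBadpar
          exact hBadG (((trc_mono (cross n G hG).2.1)).trans hBadpar))
        (by
          intro n
          obtain ⟨F, hF, h⟩ := hgood n
          exact ⟨F, hF, h⟩)
      obtain ⟨V', hV', hUV⟩ := subtype_open_iff V.2
      rw [Set.ext_iff] at hUV
      have hxV' : x ∈ V' := (hUV _).1 (hKV hxK)
      obtain ⟨F, n, hbad, hsub⟩ := hxV V' hV' hxV'
      exact absurd (hsub.trans fun y hy => (hUV y).2 hy) hbad
  -- saturation
  have hKsat : Kset = ⋂₀ {V : Set ↥S | IsOpen V ∧ Kset ⊆ V} := by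
    apply Set.Subset.antisymm
    · exact fun y hy V hV => hV.2 hy
    · intro y hy n
      have hyW : y ∈ (uA S (L n)).1 := hy _ ⟨(uA S (L n)).2, hKW n⟩
      obtain ⟨F, hF, hyF⟩ := Set.mem_iUnion₂.1 hyW
      exact ⟨F, hF, hyF⟩
  -- K ⊆ U
  have hKU : Kset ⊆ U.1 := by
    intro y hy
    obtain ⟨F, hF, hFy⟩ := hy 0
    exact hA₀U F hF hFy
  exact ⟨⟨Kset, hKcpt, hKsat⟩, hKU, hKnbhd⟩

end ConsonanceMain
/-! ### Part D: transfer along homeomorphisms; quasi-Polish consequences -/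

section Transfer

variable {X : Type*} {Y : Type*} [TopologicalSpace X] [TopologicalSpace Y]

lemma Consonant.of_homeomorph (f : X ≃ₜ Y) (hY : Consonant Y) : Consonant X := by
  intro H hH U hU
  set φ : OpensT Y → OpensT X := fun V => ⟨⇑f ⁻¹' V.1, V.2.preimage f.continuous⟩ with hφ
  set ψ : OpensT X → OpensT Y := fun U => ⟨⇑f.symm ⁻¹' U.1, U.2.preimage f.symm.continuous⟩
    with hψ
  have hφψ : ∀ U : OpensT X, φ (ψ U) = U := by
    intro U
    apply Subtype.ext
    ext x
    simp [hφ, hψ]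
  set H' : Set (OpensT Y) := {V | φ V ∈ H} with hH'
  have hH'scott : IsScottOpen H' := by
    constructor
    · intro a b hab ha
      exact hH.1 (OpensT.le_iff.mpr (Set.preimage_mono (OpensT.le_iff.mp hab))) ha
    · intro d' hd' hdir' a' hlub' ha'
      have hlub : IsLUB (φ '' d') (φ a') := by
        constructor
        · rintro _ ⟨V, hV, rfl⟩
          exact OpensT.le_iff.mpr (Set.preimage_mono (OpensT.le_iff.mp (hlub'.1 hV)))
        · intro W hW
          refine OpensT.le_iff.mpr ?_
          have ha'u : a'.1 = ⋃ V ∈ d', (V : OpensT Y).1 := OpensT.isLUB_eq_union hlub'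
          show ⇑f ⁻¹' a'.1 ⊆ W.1
          rw [ha'u]
          rw [Set.preimage_iUnion₂]
          exact Set.iUnion₂_subset fun V hV =>
            OpensT.le_iff.mp (hW (Set.mem_image_of_mem φ hV))
      have hdir : DirectedOn (· ≤ ·) (φ '' d') := by
        rintro _ ⟨V1, hV1, rfl⟩ _ ⟨V2, hV2, rfl⟩
        obtain ⟨V3, hV3, h13, h23⟩ := hdir' V1 hV1 V2 hV2
        exact ⟨φ V3, Set.mem_image_of_mem φ hV3,
          OpensT.le_iff.mpr (Set.preimage_mono (OpensT.le_iff.mp h13)),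
          OpensT.le_iff.mpr (Set.preimage_mono (OpensT.le_iff.mp h23))⟩
      obtain ⟨b, ⟨V, hVd, rfl⟩, hbH⟩ := hH.2 (φ '' d') (hd'.image φ) hdir (φ a') hlub ha'
      exact ⟨V, hVd, hbH⟩
  have hψU : ψ U ∈ H' := by
    show φ (ψ U) ∈ H
    rw [hφψ]
    exact hU
  obtain ⟨KY, hKY1, hKY2⟩ := hY H' hH'scott (ψ U) hψU
  have hKYsat := KY.2.2
  refine ⟨⟨⇑f ⁻¹' KY.1, f.isCompact_preimage.mpr KY.2.1, ?_⟩, ?_, ?_⟩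
  · apply Set.Subset.antisymm
    · exact fun x hx V ⟨hV, hKV⟩ => hKV hx
    · intro x hx
      have hfx : f x ∈ KY.1 := by
        rw [hKYsat]
        intro W ⟨hW, hKW⟩
        have h1 : IsOpen (⇑f ⁻¹' W) := hW.preimage f.continuous
        have h2 : ⇑f ⁻¹' KY.1 ⊆ ⇑f ⁻¹' W := Set.preimage_mono hKW
        exact hx _ ⟨h1, h2⟩
      exact hfx
  · intro x hx
    have h1 : f x ∈ (ψ U).1 := hKY1 hx
    have h2 : f.symm (f x) ∈ U.1 := h1
    rwa [f.symm_apply_apply] at h2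
  · intro V hV
    have h1 : KY.1 ⊆ (ψ V).1 := by
      intro y hy
      show f.symm y ∈ V.1
      apply hV
      show f (f.symm y) ∈ KY.1
      rwa [f.apply_symm_apply]
    have h2 := hKY2 (ψ V) h1
    have h3 : φ (ψ V) ∈ H := h2
    rwa [hφψ] at h3

lemma QuasiPolish.consonant (h : QuasiPolish X) : Consonant X := by
  obtain ⟨S, ⟨P, Q, hP, hQ, hiff⟩, ⟨f⟩⟩ := h
  exact Consonant.of_homeomorph f (consonant_pi02 hP hQ hiff)

lemma QuasiPolish.secondCountable (h : QuasiPolish X) : SecondCountableTopology X := by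
  obtain ⟨S, _, ⟨f⟩⟩ := h
  exact f.isEmbedding.secondCountableTopology

end Transfer
/-! ### Part E: a countable `▽K` basis -/

section NablaBasis

variable {X : Type*} [TopologicalSpace X]

/-- the default compact saturated set -/
def defaultUpper (X : Type*) [TopologicalSpace X] : UpperPS X :=
  ⟨satur (∅ : Set X), isCompact_satur isCompact_empty, satur_satur _⟩

lemma nabla_basis (hcons : Consonant X) (hsc : SecondCountableTopology (OpensT X)) :
    ∃ K : ℕ → UpperPS X, ∀ H : Set (OpensT X), IsScottOpen H → ∀ U ∈ H,
      ∃ m, (K m).1 ⊆ U.1 ∧ ∀ V : OpensT X, (K m).1 ⊆ V.1 → V ∈ H := by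
  classical
  obtain ⟨b, hbc, -, hbasis⟩ := TopologicalSpace.exists_countable_basis (OpensT X)
  obtain ⟨β, hβ⟩ := (hbc.insert ∅).exists_eq_range (Set.insert_nonempty _ _)
  have hβopen : ∀ p, IsOpen (β p) := by
    intro p
    have : β p ∈ insert ∅ b := hβ ▸ Set.mem_range_self p
    rcases Set.mem_insert_iff.1 this with h | h
    · rw [h]; exact isOpen_empty
    · exact hbasis.isOpen h
  set Adm : ℕ → ℕ → Prop := fun p q =>
    ∃ K : UpperPS X, (∀ V ∈ β p, K.1 ⊆ V.1) ∧ (∀ V : OpensT X, K.1 ⊆ V.1 → V ∈ β q)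
    with hAdm
  set Ksel : ℕ → ℕ → UpperPS X := fun p q =>
    if h : Adm p q then h.choose else defaultUpper X with hKsel
  refine ⟨fun m => Ksel m.unpair.1 m.unpair.2, ?_⟩
  intro H hscott U hU
  have hHopen : IsOpen H := isOpen_of_isScottOpen hscott
  obtain ⟨Hq, hHqb, hUHq, hHqH⟩ := hbasis.exists_subset_of_mem_open hU hHopen
  obtain ⟨q, hq⟩ := (hβ ▸ Set.mem_insert_of_mem _ hHqb : Hq ∈ Set.range β)
  obtain ⟨K, hK1, hK2⟩ := hcons Hq (isScottOpen_of_isOpen (hbasis.isOpen hHqb)) U hUHq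
  have hNscott : IsScottOpen {V : OpensT X | K.1 ⊆ V.1} := isScottOpen_nabla K.2.1
  obtain ⟨Hp, hHpb, hUHp, hHpN⟩ := hbasis.exists_subset_of_mem_open (hK1 : U ∈ _)
    (isOpen_of_isScottOpen hNscott)
  obtain ⟨p, hp⟩ := (hβ ▸ Set.mem_insert_of_mem _ hHpb : Hp ∈ Set.range β)
  have hadm : Adm p q := by
    refine ⟨K, ?_, ?_⟩
    · intro V hV
      exact hHpN (hp ▸ hV)
    · intro V hV
      rw [hq]
      exact hK2 V hV
  refine ⟨Nat.pair p q, ?_, ?_⟩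
  · simp only [Nat.unpair_pair, hKsel, dif_pos hadm]
    exact hadm.choose_spec.1 U (hp.symm ▸ hUHp)
  · intro V hV
    simp only [Nat.unpair_pair, hKsel, dif_pos hadm] at hV
    apply hHqH
    rw [← hq]
    exact hadm.choose_spec.2 V hV

end NablaBasis

/-! ### Part F: countably based `O(X)` implies locally compact -/

section SCtoLC

variable {X : Type*} [TopologicalSpace X]

lemma isScottOpen_nhd (x : X) : IsScottOpen {V : OpensT X | x ∈ V.1} := by
  constructor
  · intro a b hab ha; exact OpensT.le_iff.mp hab ha
  · intro d hd hdir a hlub ha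
    have heq := OpensT.isLUB_eq_union hlub
    have ha' : x ∈ a.1 := ha
    rw [heq] at ha'
    obtain ⟨V, hVd, hxV⟩ := Set.mem_iUnion₂.1 ha'
    exact ⟨V, hVd, hxV⟩

lemma mem_of_upper {K : UpperPS X} {x : X} (h : ∀ V : OpensT X, K.1 ⊆ V.1 → x ∈ V.1) :
    x ∈ K.1 := by
  rw [K.2.2]
  intro V ⟨hV, hKV⟩
  exact h ⟨V, hV⟩ hKV

lemma subset_of_upper {K : UpperPS X} {C : Set X} (h : ∀ V : OpensT X, K.1 ⊆ V.1 → C ⊆ V.1) :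
    C ⊆ K.1 := by
  rw [K.2.2]
  intro c hc V ⟨hV, hKV⟩
  exact h ⟨V, hV⟩ hKV hc

lemma locallyCompact_of_secondCountable (hqp : QuasiPolish X)
    (hsc : SecondCountableTopology (OpensT X)) : LocallyCompactSpace X := by
  classical
  haveI := hqp.secondCountable
  obtain ⟨Kf, hKf⟩ := nabla_basis hqp.consonant hsc
  refine ⟨fun x n hn => ?_⟩
  obtain ⟨U₀, hU₀n, hU₀open, hxU₀⟩ := mem_nhds_iff.1 hn
  -- decreasing open neighborhood basis at x
  obtain ⟨s, hs⟩ := (𝓝 x).exists_antitone_basis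
  set W : ℕ → Set X := fun i => U₀ ∩ ⋂ j ∈ Finset.range (i+1), interior (s j) with hW
  have hWopen : ∀ i, IsOpen (W i) := fun i =>
    hU₀open.inter (isOpen_biInter_finset fun j _ => isOpen_interior)
  have hxW : ∀ i, x ∈ W i := by
    intro i
    refine ⟨hxU₀, Set.mem_biInter fun j _ => ?_⟩
    exact mem_interior_iff_mem_nhds.2 (hs.1.mem_of_mem trivial)
  have hWU₀ : ∀ i, W i ⊆ U₀ := fun i => Set.inter_subset_left
  have hWanti : ∀ i i', i ≤ i' → W i' ⊆ W i := by
    intro i i' hii' y hy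
    refine ⟨hy.1, Set.mem_biInter fun j hj => ?_⟩
    exact Set.biInter_subset_of_mem (Finset.mem_range.2 (by
      have := Finset.mem_range.1 hj; omega)) hy.2
  have hWbasis : ∀ N ∈ 𝓝 x, ∃ i, W i ⊆ N := by
    intro N hN
    obtain ⟨i, -, hsi⟩ := hs.1.mem_iff.1 hN
    refine ⟨i, fun y hy => hsi (interior_subset ?_)⟩
    exact Set.biInter_subset_of_mem (Finset.mem_range.2 (by omega)) hy.2
  -- the index set M
  set M : Set ℕ := {m | x ∈ (Kf m).1 ∧ (Kf m).1 ⊆ U₀} with hM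
  have hMne : M.Nonempty := by
    obtain ⟨m, hm1, hm2⟩ := hKf {V : OpensT X | x ∈ V.1} (isScottOpen_nhd x)
      ⟨U₀, hU₀open⟩ hxU₀
    exact ⟨m, mem_of_upper fun V hV => hm2 V hV, hm1⟩
  obtain ⟨f, hf⟩ := (Set.to_countable M).exists_eq_range hMne
  by_cases hA : ∃ i, W i ⊆ (Kf (f i)).1
  · obtain ⟨i, hi⟩ := hA
    have hfiM : f i ∈ M := hf ▸ Set.mem_range_self i
    exact ⟨(Kf (f i)).1, Filter.mem_of_superset ((hWopen i).mem_nhds (hxW i)) hi,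
      hfiM.2.trans hU₀n, (Kf (f i)).2.1⟩
  · push_neg at hA
    have hz : ∀ i, ∃ z, z ∈ W i ∧ z ∉ (Kf (f i)).1 := by
      intro i
      obtain ⟨z, hz1, hz2⟩ := Set.not_subset.1 (hA i)
      exact ⟨z, hz1, hz2⟩
    choose z hz1 hz2 using hz
    have htend : Filter.Tendsto z Filter.atTop (𝓝 x) := by
      rw [Filter.tendsto_atTop']
      intro N hN
      obtain ⟨i₀, hi₀⟩ := hWbasis N hN
      exact ⟨i₀, fun i hi => hi₀ (hWanti i₀ i hi (hz1 i))⟩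
    have hC₀cpt : IsCompact (insert x (Set.range z)) := htend.isCompact_insert_range
    have hC₀U₀ : insert x (Set.range z) ⊆ U₀ := by
      rintro y (rfl | ⟨i, rfl⟩)
      · exact hxU₀
      · exact hWU₀ i (hz1 i)
    set C : Set X := satur (insert x (Set.range z)) with hC
    have hCU₀ : C ⊆ U₀ := satur_subset hU₀open hC₀U₀
    obtain ⟨m, hm1, hm2⟩ := hKf {V : OpensT X | C ⊆ V.1}
      (isScottOpen_nabla (isCompact_satur hC₀cpt)) ⟨U₀, hU₀open⟩ hCU₀
    have hCKm : C ⊆ (Kf m).1 := subset_of_upper fun V hV => hm2 V hV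
    have hmM : m ∈ M := ⟨hCKm (subset_satur _ (Set.mem_insert _ _)), hm1⟩
    obtain ⟨i, rfl⟩ := hf ▸ hmM
    exact absurd (hCKm (subset_satur _ (Set.mem_insert_of_mem _ ⟨i, rfl⟩))) (hz2 i)

end SCtoLC
/-! ### Part G0: `IsPi02` combinators -/

section Pi02

lemma isPi02_forall_imp (u v : ℕ → Set (Set ℕ)) (hu : ∀ n, IsOpen (u n))
    (hv : ∀ n, IsOpen (v n)) : IsPi02 {x : Set ℕ | ∀ n, x ∈ u n → x ∈ v n} :=
  ⟨u, v, hu, hv, fun _ => Iff.rfl⟩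

lemma IsPi02.inter {A B : Set (Set ℕ)} (hA : IsPi02 A) (hB : IsPi02 B) :
    IsPi02 (A ∩ B) := by
  classical
  obtain ⟨u1, v1, hu1, hv1, h1⟩ := hA
  obtain ⟨u2, v2, hu2, hv2, h2⟩ := hB
  refine ⟨fun n => if Even n then u1 (n / 2) else u2 (n / 2),
    fun n => if Even n then v1 (n / 2) else v2 (n / 2),
    fun n => by by_cases h : Even n <;> simp [h, hu1, hu2],
    fun n => by by_cases h : Even n <;> simp [h, hv1, hv2], fun y => ?_⟩
  constructor
  · rintro ⟨hyA, hyB⟩ n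
    by_cases h : Even n <;> simp only [h, if_true, if_false, if_pos, if_neg, not_false_iff]
    · exact (h1 y).1 hyA (n / 2)
    · exact (h2 y).1 hyB (n / 2)
  · intro hy
    constructor
    · refine (h1 y).2 fun i => ?_
      have := hy (2 * i)
      simp only [even_two_mul, if_pos, Nat.mul_div_cancel_left i (by norm_num : 0 < 2)] at this
      simpa using this
    · refine (h2 y).2 fun i => ?_
      have := hy (2 * i + 1)
      have hodd : ¬ Even (2 * i + 1) := by simp [Nat.even_add_one, Nat.even_mul]
      simp only [hodd, if_false] at this
      have harith : (2 * i + 1) / 2 = i := by omega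
      rw [harith] at this
      exact this

end Pi02
/-! ### Part G1: the embedding data for `O(X)` of a locally compact space -/

section LCEmbed

attribute [local instance] Classical.propDecidable

variable {X : Type*} [TopologicalSpace X] (B : ℕ → Set X)

/-- finite unions of basic opens -/
def Wb (F : Finset ℕ) : Set X := ⋃ j ∈ F, B j

/-- `F` is way below `G` -/
def Rb (F G : Finset ℕ) : Prop := ∃ c : Set X, IsCompact c ∧ Wb B F ⊆ c ∧ c ⊆ Wb B G

/-- `F` is way below the open `U` -/
def EFb (U : OpensT X) (F : Finset ℕ) : Prop :=
  ∃ c : Set X, IsCompact c ∧ Wb B F ⊆ c ∧ c ⊆ U.1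

/-- the embedding of `O(X)` into `P(ω)` -/
def eMap (U : OpensT X) : Set ℕ := {n | ∃ F, Encodable.encode F = n ∧ EFb B U F}

variable {B}

lemma Wb_open (hBopen : ∀ j, IsOpen (B j)) (F : Finset ℕ) : IsOpen (Wb B F) :=
  isOpen_biUnion fun j _ => hBopen j

lemma Wb_mono {F G : Finset ℕ} (h : F ⊆ G) : Wb B F ⊆ Wb B G :=
  Set.biUnion_subset_biUnion_left (by exact_mod_cast h)

lemma Wb_union (F G : Finset ℕ) : Wb B (F ∪ G) = Wb B F ∪ Wb B G := by
  ext x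
  simp only [Wb, Set.mem_iUnion, Set.mem_union, Finset.mem_union]
  constructor
  · rintro ⟨j, hj | hj, hx⟩
    · exact Or.inl ⟨j, hj, hx⟩
    · exact Or.inr ⟨j, hj, hx⟩
  · rintro (⟨j, hj, hx⟩ | ⟨j, hj, hx⟩)
    · exact ⟨j, Or.inl hj, hx⟩
    · exact ⟨j, Or.inr hj, hx⟩

lemma Wb_singleton (j : ℕ) : Wb B {j} = B j := by
  simp [Wb]

lemma Wb_empty : Wb B (∅ : Finset ℕ) = ∅ := by simp [Wb]

lemma mem_eMap {U : OpensT X} {F : Finset ℕ} :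
    Encodable.encode F ∈ eMap B U ↔ EFb B U F := by
  constructor
  · rintro ⟨F', hF', hEF⟩
    rwa [Encodable.encode_injective hF'] at hEF
  · intro h
    exact ⟨F, rfl, h⟩

variable [LocallyCompactSpace X]
  (hBopen : ∀ j, IsOpen (B j))
  (hBbasis : ∀ V : Set X, IsOpen V → ∀ x ∈ V, ∃ j, x ∈ B j ∧ B j ⊆ V)

include hBopen hBbasis

/-- every open is the union of its way-below basic opens (elementwise version) -/
lemma opensT_rec (U : OpensT X) : U.1 = ⋃ F ∈ {F : Finset ℕ | EFb B U F}, Wb B F := by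
  apply Set.Subset.antisymm
  · intro x hx
    obtain ⟨s, hs𝓝, hsU, hscpt⟩ :=
      LocallyCompactSpace.local_compact_nhds x U.1 (U.2.mem_nhds hx)
    have hxint : x ∈ interior s := mem_interior_iff_mem_nhds.2 hs𝓝
    obtain ⟨j, hxj, hjint⟩ := hBbasis (interior s) isOpen_interior x hxint
    refine Set.mem_iUnion₂.2 ⟨{j}, ⟨s, hscpt, ?_, hsU⟩, ?_⟩
    · rw [Wb_singleton]; exact hjint.trans interior_subset
    · rw [Wb_singleton]; exact hxj
  · refine Set.iUnion₂_subset fun F hF => ?_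
    obtain ⟨c, _, hWc, hcU⟩ := hF
    exact hWc.trans hcU

lemma eMap_injective : Function.Injective (eMap B) := by
  intro U U' h
  have hEF : ∀ F, EFb B U F ↔ EFb B U' F := by
    intro F
    rw [← mem_eMap, ← mem_eMap, h]
  apply Subtype.ext
  rw [opensT_rec hBopen hBbasis U, opensT_rec hBopen hBbasis U']
  apply Set.Subset.antisymm <;>
    · refine Set.iUnion₂_subset fun F hF => ?_
      refine Set.subset_biUnion_of_mem ?_
      first
        | exact (hEF F).1 hF
        | exact (hEF F).2 hF

/-- interpolation -/
lemma eMap_interp {U : OpensT X} {F : Finset ℕ} (h : EFb B U F) :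
    ∃ G, Rb B F G ∧ EFb B U G := by
  obtain ⟨c, hcpt, hWFc, hcU⟩ := h
  have hex : ∀ x : X, ∃ (j : ℕ) (cc : Set X), x ∈ c →
      (x ∈ B j ∧ IsCompact cc ∧ B j ⊆ cc ∧ cc ⊆ U.1) := by
    intro x
    by_cases hx : x ∈ c
    · obtain ⟨s, hs𝓝, hsU, hscpt⟩ :=
        LocallyCompactSpace.local_compact_nhds x U.1 (U.2.mem_nhds (hcU hx))
      have hxint : x ∈ interior s := mem_interior_iff_mem_nhds.2 hs𝓝
      obtain ⟨j, hxj, hjint⟩ := hBbasis (interior s) isOpen_interior x hxint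
      exact ⟨j, s, fun _ => ⟨hxj, hscpt, hjint.trans interior_subset, hsU⟩⟩
    · exact ⟨0, ∅, fun h => absurd h hx⟩
  choose jf ccf hspec using hex
  obtain ⟨t, ht⟩ := hcpt.elim_finite_subcover (fun i : ↥c => B (jf i.val))
    (fun i => hBopen _) (fun x hx => Set.mem_iUnion.2 ⟨⟨x, hx⟩, (hspec x hx).1⟩)
  set G : Finset ℕ := t.image (fun i => jf i.val) with hG
  have hcWG : c ⊆ Wb B G := by
    intro y hy
    obtain ⟨i, hit, hyB⟩ := Set.mem_iUnion₂.1 (ht hy)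
    exact Set.mem_iUnion₂.2 ⟨jf i.val, Finset.mem_image_of_mem _ hit, hyB⟩
  refine ⟨G, ⟨c, hcpt, hWFc, hcWG⟩, ⋃ i ∈ t, ccf i.val, ?_, ?_, ?_⟩
  · exact t.finite_toSet.isCompact_biUnion fun i hi => (hspec i.val i.prop).2.1
  · intro y hy
    obtain ⟨j, hjG, hyB⟩ := Set.mem_iUnion₂.1 hy
    rw [hG] at hjG
    obtain ⟨i, hit, rfl⟩ := Finset.mem_image.1 hjG
    exact Set.mem_iUnion₂.2 ⟨i, hit, (hspec i.val i.prop).2.2.1 hyB⟩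
  · refine Set.iUnion₂_subset fun i hi => (hspec i.val i.prop).2.2.2

end LCEmbed
/-! ### Part G2: the `Π⁰₂` description of the image -/

section LCEmbed2

attribute [local instance] Classical.propDecidable

variable {X : Type*} [TopologicalSpace X] (B : ℕ → Set X)

lemma eMap_down {U : OpensT X} {F G : Finset ℕ} (hF : EFb B U F) (hR : Rb B G F) :
    EFb B U G := by
  obtain ⟨c, hcpt, hWGc, hcWF⟩ := hR
  obtain ⟨cF, _, hWFcF, hcFU⟩ := hF
  exact ⟨c, hcpt, hWGc, hcWF.trans (hWFcF.trans hcFU)⟩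

lemma eMap_union {U : OpensT X} {F G : Finset ℕ} (hF : EFb B U F) (hG : EFb B U G) :
    EFb B U (F ∪ G) := by
  obtain ⟨cF, hcFcpt, hWF, hcFU⟩ := hF
  obtain ⟨cG, hcGcpt, hWG, hcGU⟩ := hG
  refine ⟨cF ∪ cG, hcFcpt.union hcGcpt, ?_, Set.union_subset hcFU hcGU⟩
  rw [Wb_union]
  exact Set.union_subset (hWF.trans Set.subset_union_left)
    (hWG.trans Set.subset_union_right)

lemma eMap_emptyF (U : OpensT X) : EFb B U (∅ : Finset ℕ) :=
  ⟨∅, isCompact_empty, by rw [Wb_empty], Set.empty_subset _⟩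

/-- the set of opens way above `F` is Scott open -/
lemma isScottOpen_EFb (F : Finset ℕ) : IsScottOpen {U : OpensT X | EFb B U F} := by
  have heq : {U : OpensT X | EFb B U F} =
      ⋃₀ {N | ∃ c : Set X, IsCompact c ∧ Wb B F ⊆ c ∧ N = {V : OpensT X | c ⊆ V.1}} := by
    apply Set.Subset.antisymm
    · rintro U ⟨c, hcpt, hWc, hcU⟩
      exact ⟨{V : OpensT X | c ⊆ V.1}, ⟨c, hcpt, hWc, rfl⟩, hcU⟩
    · rintro U ⟨N, ⟨c, hcpt, hWc, rfl⟩, hU⟩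
      exact ⟨c, hcpt, hWc, hU⟩
  rw [heq]
  apply isScottOpen_sUnion
  rintro N ⟨c, hcpt, hWc, rfl⟩
  exact isScottOpen_nabla hcpt

/-- `mem`-lemma for singleton basic opens -/
lemma mem_bas_singleton {n : ℕ} {s : Set ℕ} : s ∈ bas {n} ↔ n ∈ s := by
  simp [bas]

/-- condition (1): every element is a code -/
def C1set : Set (Set ℕ) :=
  {s | ∀ n, s ∈ bas {n} →
    s ∈ (if ∃ F : Finset ℕ, Encodable.encode F = n then (Set.univ : Set (Set ℕ)) else ∅)}

lemma c1_iff {s : Set ℕ} : s ∈ C1set ↔ ∀ n ∈ s, ∃ F : Finset ℕ, Encodable.encode F = n := by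
  constructor
  · intro h n hn
    have := h n (mem_bas_singleton.2 hn)
    by_cases hex : ∃ F : Finset ℕ, Encodable.encode F = n
    · exact hex
    · rw [if_neg hex] at this; exact absurd this (Set.notMem_empty s)
  · intro h n hn
    have hex := h n (mem_bas_singleton.1 hn)
    rw [if_pos hex]
    trivial

/-- condition (2): downward closure under `Rb` -/
def C2set : Set (Set ℕ) :=
  {s | ∀ t, s ∈ ((Encodable.decode (α := Finset ℕ × Finset ℕ) t).elim ∅
      (fun p => if Rb B p.2 p.1 then bas {Encodable.encode p.1} else ∅)) →
    s ∈ ((Encodable.decode (α := Finset ℕ × Finset ℕ) t).elim ∅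
      (fun p => bas {Encodable.encode p.2}))}

lemma c2_iff {s : Set ℕ} : s ∈ C2set B ↔
    ∀ F G : Finset ℕ, Rb B G F → Encodable.encode F ∈ s → Encodable.encode G ∈ s := by
  constructor
  · intro h F G hR hF
    have := h (Encodable.encode (F, G))
    rw [Encodable.encodek] at this
    simp only [Option.elim_some, if_pos hR] at this
    exact mem_bas_singleton.1 (this (mem_bas_singleton.2 hF))
  · intro h t
    cases hd : Encodable.decode (α := Finset ℕ × Finset ℕ) t with
    | none => simp
    | some p =>
        simp only [Option.elim_some]
        by_cases hR : Rb B p.2 p.1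
        · rw [if_pos hR]
          intro hmem
          exact mem_bas_singleton.2 (h p.1 p.2 hR (mem_bas_singleton.1 hmem))
        · rw [if_neg hR]
          intro hmem
          exact absurd hmem (Set.notMem_empty s)

/-- condition (3): interpolation -/
def C3set : Set (Set ℕ) :=
  {s | ∀ t, s ∈ ((Encodable.decode (α := Finset ℕ) t).elim ∅
      (fun F => bas {Encodable.encode F})) →
    s ∈ ((Encodable.decode (α := Finset ℕ) t).elim ∅
      (fun F => ⋃ G ∈ {G : Finset ℕ | Rb B F G}, bas {Encodable.encode G}))}

lemma c3_iff {s : Set ℕ} : s ∈ C3set B ↔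
    ∀ F : Finset ℕ, Encodable.encode F ∈ s → ∃ G, Rb B F G ∧ Encodable.encode G ∈ s := by
  constructor
  · intro h F hF
    have := h (Encodable.encode F)
    rw [Encodable.encodek] at this
    simp only [Option.elim_some] at this
    obtain ⟨G, hG, hmem⟩ := Set.mem_iUnion₂.1 (this (mem_bas_singleton.2 hF))
    exact ⟨G, hG, mem_bas_singleton.1 hmem⟩
  · intro h t
    cases hd : Encodable.decode (α := Finset ℕ) t with
    | none => simp
    | some F =>
        simp only [Option.elim_some]
        intro hmem
        obtain ⟨G, hG, hGs⟩ := h F (mem_bas_singleton.1 hmem)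
        exact Set.mem_iUnion₂.2 ⟨G, hG, mem_bas_singleton.2 hGs⟩

/-- condition (4): closure under unions -/
def C4set : Set (Set ℕ) :=
  {s | ∀ t, s ∈ ((Encodable.decode (α := Finset ℕ × Finset ℕ) t).elim ∅
      (fun p => bas {Encodable.encode p.1} ∩ bas {Encodable.encode p.2})) →
    s ∈ ((Encodable.decode (α := Finset ℕ × Finset ℕ) t).elim ∅
      (fun p => bas {Encodable.encode (p.1 ∪ p.2)}))}

lemma c4_iff {s : Set ℕ} : s ∈ C4set ↔
    ∀ F G : Finset ℕ, Encodable.encode F ∈ s → Encodable.encode G ∈ s →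
      Encodable.encode (F ∪ G) ∈ s := by
  constructor
  · intro h F G hF hG
    have := h (Encodable.encode (F, G))
    rw [Encodable.encodek] at this
    simp only [Option.elim_some] at this
    exact mem_bas_singleton.1 (this ⟨mem_bas_singleton.2 hF, mem_bas_singleton.2 hG⟩)
  · intro h t
    cases hd : Encodable.decode (α := Finset ℕ × Finset ℕ) t with
    | none => simp
    | some p =>
        simp only [Option.elim_some]
        rintro ⟨h1, h2⟩
        exact mem_bas_singleton.2 (h p.1 p.2 (mem_bas_singleton.1 h1) (mem_bas_singleton.1 h2))

/-- condition (5): the empty code belongs -/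
def C5set : Set (Set ℕ) :=
  {s | ∀ _ : ℕ, s ∈ (Set.univ : Set (Set ℕ)) →
    s ∈ bas {Encodable.encode (∅ : Finset ℕ)}}

lemma c5_iff {s : Set ℕ} : s ∈ C5set ↔ Encodable.encode (∅ : Finset ℕ) ∈ s := by
  constructor
  · intro h; exact mem_bas_singleton.1 (h 0 trivial)
  · intro h t _; exact mem_bas_singleton.2 h

/-- the image set -/
def S0set : Set (Set ℕ) := C1set ∩ (C2set B ∩ (C3set B ∩ (C4set ∩ C5set)))

lemma isPi02_S0set : IsPi02 (S0set B) := by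
  refine IsPi02.inter ?_ (IsPi02.inter ?_ (IsPi02.inter ?_ (IsPi02.inter ?_ ?_)))
  · exact isPi02_forall_imp _ _ (fun n => isOpen_bas _)
      (fun n => by by_cases h : ∃ F : Finset ℕ, Encodable.encode F = n <;>
        simp [h, isOpen_univ, isOpen_empty])
  · refine isPi02_forall_imp _ _ (fun t => ?_) (fun t => ?_) <;>
      · cases Encodable.decode (α := Finset ℕ × Finset ℕ) t with
        | none => exact isOpen_empty
        | some p =>
            simp only [Option.elim_some]
            first
              | (split <;> [exact isOpen_bas _; exact isOpen_empty])
              | exact isOpen_bas _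
  · refine isPi02_forall_imp _ _ (fun t => ?_) (fun t => ?_) <;>
      · cases Encodable.decode (α := Finset ℕ) t with
        | none => exact isOpen_empty
        | some F =>
            simp only [Option.elim_some]
            first
              | exact isOpen_bas _
              | exact isOpen_biUnion fun G _ => isOpen_bas _
  · refine isPi02_forall_imp _ _ (fun t => ?_) (fun t => ?_) <;>
      · cases Encodable.decode (α := Finset ℕ × Finset ℕ) t with
        | none => exact isOpen_empty
        | some p =>
            simp only [Option.elim_some]
            first
              | exact (isOpen_bas _).inter (isOpen_bas _)
              | exact isOpen_bas _
  · exact isPi02_forall_imp _ _ (fun _ => isOpen_univ) (fun _ => isOpen_bas _)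

end LCEmbed2
/-! ### Part G3: image identification and the homeomorphism -/

section LCEmbed3

attribute [local instance] Classical.propDecidable

variable {X : Type*} [TopologicalSpace X] {B : ℕ → Set X} [LocallyCompactSpace X]
  (hBopen : ∀ j, IsOpen (B j))
  (hBbasis : ∀ V : Set X, IsOpen V → ∀ x ∈ V, ∃ j, x ∈ B j ∧ B j ⊆ V)

include hBopen hBbasis in
lemma range_eMap : Set.range (eMap B) = S0set B := by
  apply Set.Subset.antisymm
  · rintro s ⟨U, rfl⟩
    refine ⟨c1_iff.2 ?_, (c2_iff B).2 ?_, (c3_iff B).2 ?_, c4_iff.2 ?_, c5_iff.2 ?_⟩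
    · rintro n ⟨F, hF, -⟩
      exact ⟨F, hF⟩
    · intro F G hR hF
      exact mem_eMap.2 (eMap_down B (mem_eMap.1 hF) hR)
    · intro F hF
      obtain ⟨G, hR, hEF⟩ := eMap_interp hBopen hBbasis (mem_eMap.1 hF)
      exact ⟨G, hR, mem_eMap.2 hEF⟩
    · intro F G hF hG
      exact mem_eMap.2 (eMap_union B (mem_eMap.1 hF) (mem_eMap.1 hG))
    · exact mem_eMap.2 (eMap_emptyF B U)
  · intro s hs
    obtain ⟨h1, h2, h3, h4, h5⟩ := hs
    rw [c1_iff] at h1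
    rw [c2_iff] at h2
    rw [c3_iff] at h3
    rw [c4_iff] at h4
    rw [c5_iff] at h5
    set Us : OpensT X := ⟨⋃ F ∈ {F : Finset ℕ | Encodable.encode F ∈ s}, Wb B F,
      isOpen_biUnion fun F _ => Wb_open hBopen F⟩ with hUs
    refine ⟨Us, ?_⟩
    ext n
    constructor
    · rintro ⟨F, rfl, c, hcpt, hWc, hcU⟩
      obtain ⟨t, ht⟩ := hcpt.elim_finite_subcover
        (fun i : {F' : Finset ℕ // Encodable.encode F' ∈ s} => Wb B i.1)
        (fun i => Wb_open hBopen _)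
        (by
          intro x hx
          obtain ⟨F', hF', hxF'⟩ := Set.mem_iUnion₂.1 (hcU hx)
          exact Set.mem_iUnion.2 ⟨⟨F', hF'⟩, hxF'⟩)
      set G : Finset ℕ := t.sup (fun i => i.1) with hGdef
      have hencG : Encodable.encode G ∈ s := by
        refine Finset.sup_induction (p := fun G : Finset ℕ => Encodable.encode G ∈ s) ?_ ?_ ?_
        · rw [Finset.bot_eq_empty]; exact h5
        · intro a ha b hb
          have : a ⊔ b = a ∪ b := rfl
          rw [this]
          exact h4 a b ha hb
        · exact fun i _ => i.2
      have hcWG : c ⊆ Wb B G := by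
        intro y hy
        obtain ⟨i, hit, hyi⟩ := Set.mem_iUnion₂.1 (ht hy)
        exact Wb_mono (Finset.le_sup hit) hyi
      exact h2 G F ⟨c, hcpt, hWc, hcWG⟩ hencG
    · intro hn
      obtain ⟨F, rfl⟩ := h1 n hn
      obtain ⟨G, hR, hGs⟩ := h3 F hn
      obtain ⟨c, hcpt, hWFc, hcWG⟩ := hR
      refine ⟨F, rfl, c, hcpt, hWFc, hcWG.trans ?_⟩
      exact Set.subset_biUnion_of_mem (hGs : G ∈ {G : Finset ℕ | Encodable.encode G ∈ s})

lemma continuous_to_SetNat {α : Type*} [TopologicalSpace α] (f : α → Set ℕ)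
    (h : ∀ F : Finset ℕ, IsOpen (f ⁻¹' bas F)) : Continuous f := by
  refine continuous_def.2 fun s hs => ?_
  have hs' : TopologicalSpace.GenerateOpen
      {S | ∃ F : Finset ℕ, S = {x : Set ℕ | ↑F ⊆ x}} s := hs
  clear hs
  induction hs' with
  | basic s hsb => obtain ⟨F, rfl⟩ := hsb; exact h F
  | univ => simpa using isOpen_univ
  | inter s t _ _ ihs iht => rw [Set.preimage_inter]; exact ihs.inter iht
  | sUnion S _ ih =>
      rw [Set.preimage_sUnion]
      exact isOpen_biUnion ih

lemma eMap_continuous : Continuous (eMap B) := by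
  refine continuous_to_SetNat _ fun F₀ => ?_
  have heq : eMap B ⁻¹' bas F₀ =
      ⋂ n ∈ F₀, {U : OpensT X | n ∈ eMap B U} := by
    ext U
    simp only [Set.mem_preimage, bas, Set.mem_setOf_eq, Set.mem_iInter, Set.subset_def]
    exact ⟨fun h n hn => h n (by exact_mod_cast hn), fun h n hn => h n (by exact_mod_cast hn)⟩
  rw [heq]
  refine isOpen_biInter_finset fun n hn => ?_
  by_cases hex : ∃ F : Finset ℕ, Encodable.encode F = n
  · obtain ⟨F, rfl⟩ := hex
    have : {U : OpensT X | Encodable.encode F ∈ eMap B U} = {U : OpensT X | EFb B U F} := by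
      ext U; exact mem_eMap
    rw [this]
    exact isOpen_of_isScottOpen (isScottOpen_EFb B F)
  · have : {U : OpensT X | n ∈ eMap B U} = ∅ := by
      ext U
      simp only [Set.mem_setOf_eq, Set.mem_empty_iff_false, iff_false]
      rintro ⟨F, hF, -⟩
      exact hex ⟨F, hF⟩
    rw [this]
    exact isOpen_empty

include hBopen hBbasis in
lemma eMap_open_preimage {H : Set (OpensT X)} (hH : IsOpen H) :
    ∃ Gset : Set (Set ℕ), IsOpen Gset ∧ eMap B ⁻¹' Gset = H := by
  have hHs := isScottOpen_of_isOpen hH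
  refine ⟨⋃ F ∈ {F : Finset ℕ | (∃ c, IsCompact c ∧ Wb B F ⊆ c) ∧
    (⟨Wb B F, Wb_open hBopen F⟩ : OpensT X) ∈ H}, bas {Encodable.encode F},
    isOpen_biUnion fun F _ => isOpen_bas _, ?_⟩
  apply Set.Subset.antisymm
  · intro U hU
    obtain ⟨F, ⟨-, hWFH⟩, hbasmem⟩ := Set.mem_iUnion₂.1 hU
    have hEF : EFb B U F := mem_eMap.1 (mem_bas_singleton.1 hbasmem)
    obtain ⟨c, -, hWc, hcU⟩ := hEF
    exact hHs.1 (OpensT.le_iff.mpr (hWc.trans hcU : Wb B F ⊆ U.1)) hWFH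
  · intro U hU
    set J : Set ℕ := {j | ∃ c, IsCompact c ∧ B j ⊆ c ∧ c ⊆ U.1} with hJ
    have hAeq : U.1 = ⋃ j ∈ J, ((fun j => (⟨B j, hBopen j⟩ : OpensT X)) j).1 := by
      apply Set.Subset.antisymm
      · intro x hx
        obtain ⟨s', hs𝓝, hsU, hscpt⟩ :=
          LocallyCompactSpace.local_compact_nhds x U.1 (U.2.mem_nhds hx)
        obtain ⟨j, hxj, hjint⟩ := hBbasis (interior s') isOpen_interior x
          (mem_interior_iff_mem_nhds.2 hs𝓝)
        exact Set.mem_iUnion₂.2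
          ⟨j, ⟨s', hscpt, hjint.trans interior_subset, hsU⟩, hxj⟩
      · refine Set.iUnion₂_subset fun j hj => ?_
        obtain ⟨c, -, hjc, hcU⟩ := hj
        exact hjc.trans hcU
    obtain ⟨J', hJ'J, hJ'fin, hB'⟩ := scott_extract hHs J
      (fun j => (⟨B j, hBopen j⟩ : OpensT X)) U hAeq hU
    set F : Finset ℕ := hJ'fin.toFinset with hF
    have hWFeq : Wb B F = ⋃ j ∈ J', B j := by
      ext x
      simp only [Wb, Set.mem_iUnion]
      constructor
      · rintro ⟨j, hj, hx⟩
        exact ⟨j, hJ'fin.mem_toFinset.1 hj, hx⟩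
      · rintro ⟨j, hj, hx⟩
        exact ⟨j, hJ'fin.mem_toFinset.2 hj, hx⟩
    have hWFH : (⟨Wb B F, Wb_open hBopen F⟩ : OpensT X) ∈ H := by
      apply hB'
      exact hWFeq
    have hcap : ∀ j : ℕ, ∃ c, j ∈ J' → (IsCompact c ∧ B j ⊆ c ∧ c ⊆ U.1) := by
      intro j
      by_cases hj : j ∈ J'
      · obtain ⟨c, h1, h2, h3⟩ := hJ'J hj
        exact ⟨c, fun _ => ⟨h1, h2, h3⟩⟩
      · exact ⟨∅, fun h => absurd h hj⟩
    choose cc hcc using hcap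
    have hcstar : IsCompact (⋃ j ∈ F, cc j) :=
      F.finite_toSet.isCompact_biUnion fun j hj => (hcc j (hJ'fin.mem_toFinset.1 hj)).1
    have hWsub : Wb B F ⊆ ⋃ j ∈ F, cc j := by
      intro y hy
      obtain ⟨j, hj, hyj⟩ := Set.mem_iUnion₂.1 hy
      exact Set.mem_iUnion₂.2 ⟨j, hj, (hcc j (hJ'fin.mem_toFinset.1 hj)).2.1 hyj⟩
    have hEF : EFb B U F :=
      ⟨⋃ j ∈ F, cc j, hcstar, hWsub,
        Set.iUnion₂_subset fun j hj => (hcc j (hJ'fin.mem_toFinset.1 hj)).2.2⟩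
    exact Set.mem_iUnion₂.2 ⟨F, ⟨⟨⋃ j ∈ F, cc j, hcstar, hWsub⟩, hWFH⟩,
      mem_bas_singleton.2 (mem_eMap.2 hEF)⟩

end LCEmbed3
/-! ### Part G4: conclusion for locally compact quasi-Polish spaces -/

theorem quasiPolish_opensT {X : Type*} [TopologicalSpace X] (hqp : QuasiPolish X)
    (hLC : LocallyCompactSpace X) : QuasiPolish (OpensT X) := by
  classical
  haveI := hqp.secondCountable
  obtain ⟨bX, hbXc, -, hbX⟩ := TopologicalSpace.exists_countable_basis X
  obtain ⟨B, hB⟩ := (hbXc.insert ∅).exists_eq_range (Set.insert_nonempty _ _)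
  have hBopen : ∀ j, IsOpen (B j) := by
    intro j
    have : B j ∈ insert ∅ bX := hB ▸ Set.mem_range_self j
    rcases Set.mem_insert_iff.1 this with h | h
    · rw [h]; exact isOpen_empty
    · exact hbX.isOpen h
  have hBbasis : ∀ V : Set X, IsOpen V → ∀ x ∈ V, ∃ j, x ∈ B j ∧ B j ⊆ V := by
    intro V hV x hx
    obtain ⟨W', hW'b, hxW', hW'V⟩ := hbX.exists_subset_of_mem_open hx hV
    obtain ⟨j, hj⟩ := (hB ▸ Set.mem_insert_of_mem _ hW'b : W' ∈ Set.range B)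
    exact ⟨j, by rw [hj]; exact hxW', by rw [hj]; exact hW'V⟩
  refine ⟨S0set B, isPi02_S0set B, ⟨?_⟩⟩
  have hrange := range_eMap hBopen hBbasis
  set f : OpensT X → ↥(S0set B) := fun U => ⟨eMap B U, hrange ▸ Set.mem_range_self U⟩
    with hf
  have hfsurj : Function.Surjective f := by
    rintro ⟨s, hs⟩
    rw [← hrange] at hs
    obtain ⟨U, hU⟩ := hs
    exact ⟨U, Subtype.ext hU⟩
  have hcont : Continuous f := (eMap_continuous (B := B)).subtype_mk _
  have hopen : IsOpenMap f := by
    intro H hH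
    obtain ⟨Gset, hGopen, hGpre⟩ := eMap_open_preimage hBopen hBbasis hH
    have himg : f '' H = Subtype.val ⁻¹' Gset := by
      ext ⟨s, hs⟩
      constructor
      · rintro ⟨U, hUH, hUe⟩
        have hval : eMap B U = s := congrArg Subtype.val hUe
        show s ∈ Gset
        rw [← hGpre] at hUH
        rw [← hval]
        exact hUH
      · intro hsG
        have hs' : s ∈ Set.range (eMap B) := hrange ▸ hs
        obtain ⟨U, hU⟩ := hs'
        refine ⟨U, ?_, Subtype.ext hU⟩
        rw [← hGpre]
        show eMap B U ∈ Gset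
        rw [hU]
        exact hsG
    rw [himg]
    exact hGopen.preimage continuous_subtype_val
  exact Equiv.toHomeomorphOfContinuousOpen
    (Equiv.ofBijective f ⟨fun U U' h =>
      eMap_injective hBopen hBbasis (congrArg Subtype.val h), hfsurj⟩) hcont hopen

/-- For quasi-Polish `X`: `X` is locally compact iff `O(X)` with the Scott topology is
quasi-Polish iff `O(X)` with the Scott topology is countably based. -/
theorem quasiPolish_locallyCompact_tfae (X : Type*) [TopologicalSpace X]
    (h : QuasiPolish X) :
    (LocallyCompactSpace X ↔ QuasiPolish (OpensT X)) ∧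
      (LocallyCompactSpace X ↔ SecondCountableTopology (OpensT X)) := by
  constructor
  · constructor
    · intro hLC
      exact quasiPolish_opensT h hLC
    · intro hQP
      exact locallyCompact_of_secondCountable h hQP.secondCountable
  · constructor
    · intro hLC
      exact (quasiPolish_opensT h hLC).secondCountable
    · intro hsc
      exact locallyCompact_of_secondCountable h hsc
end

section
/- Every quasi-Polish space is a Wilker space: for all open sets U₁, U₂ and every compact set K with K ⊆ U₁ ∪ U₂, there exist compact sets K₁ ⊆ U₁ and K₂ ⊆ U₂ with K ⊆ K₁ ∪ K₂. -/
open Set Topology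

open TopologicalSpace

/-! Embed `X` as a `Π⁰₂` set `S = {y | ∀ i, y ∈ A i → y ∈ B i}` of `P(ω)`, whose opens are
generated by the sets `Ici F` with `F` finite. Compactness of `K` yields finite levels `L n` of
finite sets such that every point of `K` lies above a node of each level, every node has a
parent one level down, and a node of `L n` lying in `A i` with `i < n` already lies in `B i`.
Then the union of every branch lies in `S`, the unions of the branches form a compact set (a
continuous image of the branch space, compact by Tychonoff), and every point of `K` lies above
such a union (Kőnig's lemma). Sort the branches by which of `U₁`, `U₂` contains their root, and
add the points of `K` above the corresponding unions: the result is compact because open sets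
are upward closed. -/

theorem IsCompact.union_of_specializes {X : Type*} [TopologicalSpace X] {s t : Set X}
    (hs : IsCompact s) (h : ∀ x ∈ t, ∃ y ∈ s, x ⤳ y) : IsCompact (s ∪ t) := by
  rw [isCompact_iff_finite_subcover] at hs ⊢
  intro ι U hU hcover
  obtain ⟨u, hu⟩ := hs U hU (subset_union_left.trans hcover)
  refine ⟨u, union_subset hu fun x hx => ?_⟩
  obtain ⟨y, hy, hxy⟩ := h x hx
  exact hxy.mem_open (isOpen_biUnion fun i _ => hU i) (hu hy)

section Branches

variable {α : Type*} (L : ℕ → Set α) (R : ℕ → α → α → Prop)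

def branches : Set (ℕ → α) := {f | ∀ n, f n ∈ L n ∧ R n (f n) (f (n + 1))}

variable {L R}

theorem isCompact_branches [TopologicalSpace α] [DiscreteTopology α] (hL : ∀ n, (L n).Finite) :
    IsCompact (branches L R) := by
  have hclosed : IsClosed (branches L R) := by
    have : branches L R =
        ⋂ n, (fun f : ℕ → α => (f n, f (n + 1))) ⁻¹' {p | p.1 ∈ L n ∧ R n p.1 p.2} := by
      ext; simp [branches]
    rw [this]
    exact isClosed_iInter fun n => (isClosed_discrete _).preimage (by fun_prop)
  exact (isCompact_univ_pi fun n => (hL n).isCompact).of_isClosed_subset hclosed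
    fun f hf n _ => (hf n).1

theorem exists_mem_branches_apply_eq (hne : ∀ n, (L n).Nonempty)
    (hpar : ∀ n, ∀ b ∈ L (n + 1), ∃ a ∈ L n, R n a b) (N : ℕ) :
    ∀ b ∈ L N, ∃ f ∈ branches L (fun n a b => n < N → R n a b), f N = b := by
  induction N with
  | zero =>
    intro b hb
    refine ⟨Function.update (fun n => (hne n).some) 0 b, fun n => ⟨?_, by omega⟩, by simp⟩
    rcases eq_or_ne n 0 with rfl | hn
    · simpa
    · simpa [hn] using (hne n).some_mem
  | succ N ih =>
    intro b hb
    obtain ⟨a, ha, hab⟩ := hpar N b hb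
    obtain ⟨g, hg, rfl⟩ := ih a ha
    refine ⟨Function.update g (N + 1) b, fun n => ⟨?_, fun hn => ?_⟩, by simp⟩
    · rcases eq_or_ne n (N + 1) with rfl | hn
      · simpa
      · simpa [hn] using (hg n).1
    · rcases eq_or_ne n N with rfl | hnN
      · simpa [Function.update_of_ne (Nat.ne_add_one n)] using hab
      · rw [Function.update_of_ne (by omega), Function.update_of_ne (by omega)]
        exact (hg n).2 (by omega)

/-- Kőnig's lemma. -/
theorem branches_nonempty (hL : ∀ n, (L n).Finite) (hne : ∀ n, (L n).Nonempty)
    (hpar : ∀ n, ∀ b ∈ L (n + 1), ∃ a ∈ L n, R n a b) : (branches L R).Nonempty := by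
  let : TopologicalSpace α := ⊥
  have : DiscreteTopology α := ⟨rfl⟩
  have htrunc : branches L R = ⋂ N, branches L (fun n a b => n < N → R n a b) := by
    ext f
    simp only [branches, mem_iInter, mem_ofPred_eq]
    exact ⟨fun h N n => ⟨(h n).1, fun _ => (h n).2⟩,
      fun h n => ⟨(h 0 n).1, (h (n + 1) n).2 n.lt_succ_self⟩⟩
  rw [htrunc]
  refine IsCompact.nonempty_iInter_of_sequence_nonempty_isCompact_isClosed _
    (fun N f hf n => ⟨(hf n).1, fun hn => (hf n).2 (hn.trans N.lt_succ_self)⟩)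
    (fun N => ?_) (isCompact_branches hL) (fun N => (isCompact_branches hL).isClosed)
  obtain ⟨b, hb⟩ := hne N
  obtain ⟨f, hf, -⟩ := exists_mem_branches_apply_eq hne hpar N b hb
  exact ⟨f, hf⟩

end Branches

theorem isTopologicalBasis_Ici_finset :
    IsTopologicalBasis (range fun F : Finset ℕ => Ici (F : Set ℕ)) := by
  refine isTopologicalBasis_of_subbasis_of_finiteInter ?_ ⟨⟨∅, by ext; simp⟩, ?_⟩
  · show generateFrom _ = generateFrom _
    congr 1
    ext S
    simp [eq_comm]
    rfl
  · rintro _ ⟨F, rfl⟩ _ ⟨G, rfl⟩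
    exact ⟨F ∪ G, by simp [Ici_inter_Ici]⟩

theorem isOpen_Ici_finset (F : Finset ℕ) : IsOpen (Ici (F : Set ℕ)) :=
  isTopologicalBasis_Ici_finset.isOpen ⟨F, rfl⟩

theorem IsOpen.exists_finset_Ici_subset {W : Set (Set ℕ)} (hW : IsOpen W) {x : Set ℕ}
    (hx : x ∈ W) : ∃ F : Finset ℕ, ↑F ⊆ x ∧ Ici (F : Set ℕ) ⊆ W := by
  obtain ⟨_, ⟨F, rfl⟩, hxF, hFW⟩ := isTopologicalBasis_Ici_finset.exists_subset_of_mem_open hx hW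
  exact ⟨F, hxF, hFW⟩

theorem IsOpen.isUpperSet {W : Set (Set ℕ)} (hW : IsOpen W) : IsUpperSet W := by
  intro x y hxy hx
  obtain ⟨F, hFx, hFW⟩ := hW.exists_finset_Ici_subset hx
  exact hFW (hFx.trans hxy)

theorem IsOpen.exists_finset_subset_mem {W : Set (Set ℕ)} (hW : IsOpen W) {x : Set ℕ}
    (hx : x ∈ W) : ∃ F : Finset ℕ, ↑F ⊆ x ∧ ↑F ∈ W := by
  obtain ⟨F, hFx, hFW⟩ := hW.exists_finset_Ici_subset hx
  exact ⟨F, hFx, hFW (mem_Ici.2 le_rfl)⟩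

theorem specializes_of_subset {x y : Set ℕ} (h : x ⊆ y) : y ⤳ x :=
  specializes_iff_forall_open.2 fun _ hW hx => hW.isUpperSet h hx

theorem continuous_iUnion_comp {α : Type*} [TopologicalSpace α] [DiscreteTopology α]
    (g : α → Set ℕ) : Continuous fun f : ℕ → α => ⋃ n, g (f n) := by
  refine isTopologicalBasis_Ici_finset.continuous_iff.2 ?_
  rintro _ ⟨F, rfl⟩
  have : (fun f : ℕ → α => ⋃ n, g (f n)) ⁻¹' Ici (F : Set ℕ) =
      ⋂ a ∈ F, ⋃ n, (fun f : ℕ → α => f n) ⁻¹' {b | a ∈ g b} := by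
    ext f
    simp [subset_def]
  rw [this]
  exact isOpen_biInter_finset fun a _ => isOpen_iUnion fun n =>
    (isOpen_discrete _).preimage (continuous_apply n)

theorem IsCompact.exists_finset_cover {K : Set (Set ℕ)} (hK : IsCompact K)
    (P : Finset ℕ → Set ℕ → Prop) (h : ∀ x ∈ K, ∃ F : Finset ℕ, ↑F ⊆ x ∧ P F x) :
    ∃ l : Finset (Finset ℕ), (∀ x ∈ K, ∃ G ∈ l, ↑G ⊆ x) ∧ ∀ G ∈ l, ∃ x ∈ K, P G x := by
  classical
  choose! F hFx hP using h
  obtain ⟨t, htK, hKt⟩ := hK.elim_nhds_subcover (fun x => Ici (F x : Set ℕ))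
    fun x hx => (isOpen_Ici_finset _).mem_nhds (hFx x hx)
  refine ⟨t.image F, fun x hx => ?_, fun G hG => ?_⟩
  · obtain ⟨y, hy, hxy⟩ := mem_iUnion₂.1 (hKt hx)
    exact ⟨F y, Finset.mem_image_of_mem F hy, hxy⟩
  · obtain ⟨y, hy, rfl⟩ := Finset.mem_image.1 hG
    exact ⟨y, htK y hy, hP y (htK y hy)⟩

section Levels

variable {A B : ℕ → Set (Set ℕ)} {K : Set (Set ℕ)}

theorem exists_finset_cover_refining (hA : ∀ i, IsOpen (A i)) (hB : ∀ i, IsOpen (B i))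
    (hK : IsCompact K) (hKS : ∀ x ∈ K, ∀ i, x ∈ A i → x ∈ B i) {l : Finset (Finset ℕ)}
    (hl : ∀ x ∈ K, ∃ F ∈ l, ↑F ⊆ x) (n : ℕ) :
    ∃ l' : Finset (Finset ℕ), (∀ x ∈ K, ∃ G ∈ l', ↑G ⊆ x) ∧ (∀ G ∈ l', ∃ F ∈ l, F ⊆ G) ∧
      ∀ G ∈ l', ∀ i ≤ n, ↑G ∈ A i → ↑G ∈ B i := by
  obtain ⟨l', hcover, hl'⟩ := hK.exists_finset_cover
    (fun G x => ↑G ⊆ x ∧ (∃ F ∈ l, F ⊆ G) ∧ ∀ i ≤ n, x ∈ A i → ↑G ∈ B i) fun x hx => by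
      obtain ⟨F, hF, hFx⟩ := hl x hx
      have hW : IsOpen (Ici (F : Set ℕ) ∩ ⋂ i ∈ {i | i ≤ n ∧ x ∈ A i}, B i) :=
        (isOpen_Ici_finset F).inter <|
          ((finite_Iic n).subset fun i hi => hi.1).isOpen_biInter fun i _ => hB i
      obtain ⟨G, hGx, hGF, hGB⟩ := hW.exists_finset_subset_mem
        ⟨hFx, mem_iInter₂.2 fun i hi => hKS x hx i hi.2⟩
      exact ⟨G, hGx, hGx, ⟨F, hF, Finset.coe_subset.1 hGF⟩,
        fun i hi hxi => mem_iInter₂.1 hGB i ⟨hi, hxi⟩⟩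
  refine ⟨l', hcover, fun G hG => ?_, fun G hG i hi hGA => ?_⟩
  · obtain ⟨_, -, -, hF, -⟩ := hl' G hG
    exact hF
  · obtain ⟨_, -, hGx, -, hGB⟩ := hl' G hG
    exact hGB i hi ((hA i).isUpperSet hGx hGA)

theorem exists_finset_levels (hA : ∀ i, IsOpen (A i)) (hB : ∀ i, IsOpen (B i))
    (hK : IsCompact K) (hKS : ∀ x ∈ K, ∀ i, x ∈ A i → x ∈ B i) {l₀ : Finset (Finset ℕ)}
    (hl₀ : ∀ x ∈ K, ∃ F ∈ l₀, ↑F ⊆ x) :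
    ∃ L : ℕ → Finset (Finset ℕ), L 0 = l₀ ∧ (∀ n, ∀ x ∈ K, ∃ F ∈ L n, ↑F ⊆ x) ∧
      (∀ n, ∀ G ∈ L (n + 1), ∃ F ∈ L n, F ⊆ G) ∧
      ∀ n, ∀ G ∈ L n, ∀ i < n, ↑G ∈ A i → ↑G ∈ B i := by
  let Cover := {l : Finset (Finset ℕ) // ∀ x ∈ K, ∃ F ∈ l, ↑F ⊆ x}
  have step (n : ℕ) (l : Cover) : ∃ l' : Cover, (∀ G ∈ l'.1, ∃ F ∈ l.1, F ⊆ G) ∧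
      ∀ G ∈ l'.1, ∀ i ≤ n, ↑G ∈ A i → ↑G ∈ B i :=
    let ⟨l', hcover, hparent, hgood⟩ := exists_finset_cover_refining hA hB hK hKS l.2 n
    ⟨⟨l', hcover⟩, hparent, hgood⟩
  choose next hparent hgood using step
  let L (n : ℕ) : Cover := Nat.rec ⟨l₀, hl₀⟩ next n
  refine ⟨fun n => (L n).1, rfl, fun n => (L n).2, fun n => hparent n (L n), ?_⟩
  rintro (_ | n) G hG i hi
  · exact absurd hi (Nat.not_lt_zero i)
  · exact hgood n (L n) G hG i (Nat.lt_succ_iff.1 hi)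

theorem iUnion_mem_of_monotone (hA : ∀ i, IsOpen (A i)) (hB : ∀ i, IsOpen (B i))
    {f : ℕ → Finset ℕ} (hf : Monotone f) (hgood : ∀ n, ∀ i < n, ↑(f n) ∈ A i → ↑(f n) ∈ B i)
    (i : ℕ) (hi : ⋃ n, (f n : Set ℕ) ∈ A i) : ⋃ n, (f n : Set ℕ) ∈ B i := by
  obtain ⟨F, hFf, hFA⟩ := (hA i).exists_finset_subset_mem hi
  obtain ⟨m, hm⟩ :=
    (Finset.coeEmb.monotone.comp hf).directed_le.exists_mem_subset_of_finset_subset_biUnion hFf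
  have hmax : ↑(f (max m (i + 1))) ∈ A i :=
    (hA i).isUpperSet (hm.trans (Finset.coe_subset.2 (hf (le_max_left _ _)))) hFA
  exact (hB i).isUpperSet (subset_iUnion (fun n => (f n : Set ℕ)) _)
    (hgood _ i (lt_of_lt_of_le i.lt_succ_self (le_max_right _ _)) hmax)

theorem exists_mem_branches_subset {L : ℕ → Finset (Finset ℕ)}
    (hcover : ∀ n, ∀ x ∈ K, ∃ F ∈ L n, ↑F ⊆ x) (hparent : ∀ n, ∀ G ∈ L (n + 1), ∃ F ∈ L n, F ⊆ G)
    {x : Set ℕ} (hx : x ∈ K) :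
    ∃ f ∈ branches (fun n => (L n : Set (Finset ℕ))) (fun _ => (· ⊆ ·)), ∀ n, ↑(f n) ⊆ x := by
  obtain ⟨f, hf⟩ := branches_nonempty (L := fun n => {F | F ∈ L n ∧ ↑F ⊆ x})
    (R := fun _ => (· ⊆ ·)) (fun n => (L n).finite_toSet.subset fun F hF => hF.1)
    (fun n => let ⟨F, hF, hFx⟩ := hcover n x hx; ⟨F, hF, hFx⟩)
    fun n G hG => let ⟨F, hF, hFG⟩ := hparent n G hG.1
      ⟨F, ⟨hF, (Finset.coe_subset.2 hFG).trans hG.2⟩, hFG⟩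
  exact ⟨f, fun n => ⟨(hf n).1.1, (hf n).2⟩, fun n => (hf n).1.2⟩

end Levels

theorem IsPi02.exists_isCompact_cover {S : Set (Set ℕ)} (hS : IsPi02 S) {K : Set (Set ℕ)}
    (hK : IsCompact K) (hKS : K ⊆ S) {ι : Type*} {U : ι → Set (Set ℕ)} (hU : ∀ i, IsOpen (U i))
    (hKU : K ⊆ ⋃ i, U i) :
    ∃ Q : ι → Set (Set ℕ), (∀ i, IsCompact (Q i)) ∧ (∀ i, Q i ⊆ S ∩ U i) ∧ K ⊆ ⋃ i, Q i := by
  obtain ⟨A, B, hA, hB, hS⟩ := hS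
  obtain ⟨l₀, hl₀, hl₀U⟩ := hK.exists_finset_cover (fun G _ => ∃ i, ↑G ∈ U i) fun x hx => by
    obtain ⟨i, hi⟩ := mem_iUnion.1 (hKU hx)
    obtain ⟨F, hFx, hFU⟩ := (hU i).exists_finset_subset_mem hi
    exact ⟨F, hFx, i, hFU⟩
  obtain ⟨L, rfl, hcover, hparent, hgood⟩ :=
    exists_finset_levels hA hB hK (fun x hx => (hS x).1 (hKS hx)) hl₀
  let _ : TopologicalSpace (Finset ℕ) := ⊥
  have _ : DiscreteTopology (Finset ℕ) := ⟨rfl⟩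
  let br := branches (fun n => (L n : Set (Finset ℕ))) (fun _ => (· ⊆ ·))
  let lim (f : ℕ → Finset ℕ) : Set ℕ := ⋃ n, ↑(f n)
  let C (i : ι) : Set (Set ℕ) := lim '' (br ∩ {f | ↑(f 0) ∈ U i})
  have hC (i : ι) : IsCompact (C i) :=
    ((isCompact_branches fun n => (L n).finite_toSet).inter_right
      ((isClosed_discrete {F : Finset ℕ | ↑F ∈ U i}).preimage (continuous_apply 0))).image
      (continuous_iUnion_comp fun F : Finset ℕ => (F : Set ℕ))
  have hCSU (i : ι) : C i ⊆ S ∩ U i := by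
    rintro _ ⟨f, ⟨hf, hf0⟩, rfl⟩
    have hmono : Monotone f := monotone_nat_of_le_succ fun n => (hf n).2
    exact ⟨(hS _).2 (iUnion_mem_of_monotone hA hB hmono fun n => hgood n _ (hf n).1),
      (hU i).isUpperSet (subset_iUnion (fun n => (f n : Set ℕ)) 0) hf0⟩
  refine ⟨fun i => C i ∪ {x ∈ K | ∃ z ∈ C i, z ⊆ x}, fun i => (hC i).union_of_specializes ?_,
    fun i => union_subset (hCSU i) ?_, fun x hx => ?_⟩
  · rintro x ⟨-, z, hz, hzx⟩
    exact ⟨z, hz, specializes_of_subset hzx⟩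
  · rintro x ⟨hx, z, hz, hzx⟩
    exact ⟨hKS hx, (hU i).isUpperSet hzx (hCSU i hz).2⟩
  · obtain ⟨f, hf, hfx⟩ := exists_mem_branches_subset hcover hparent hx
    obtain ⟨-, -, i, hi⟩ := hl₀U (f 0) (hf 0).1
    exact mem_iUnion.2 ⟨i, Or.inr ⟨hx, lim f, ⟨f, ⟨hf, hi⟩, rfl⟩, iUnion_subset hfx⟩⟩

theorem QuasiPolish.exists_isCompact_cover {X : Type*} [TopologicalSpace X] (hX : QuasiPolish X)
    {K : Set X} (hK : IsCompact K) {ι : Type*} {U : ι → Set X} (hU : ∀ i, IsOpen (U i))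
    (hKU : K ⊆ ⋃ i, U i) :
    ∃ Q : ι → Set X, (∀ i, IsCompact (Q i)) ∧ (∀ i, Q i ⊆ U i) ∧ K ⊆ ⋃ i, Q i := by
  obtain ⟨S, hS, ⟨e⟩⟩ := hX
  let j : X → Set ℕ := fun x => e x
  have hj : IsEmbedding j := IsEmbedding.subtypeVal.comp e.isEmbedding
  have hrange : range j = S := by
    rw [show j = Subtype.val ∘ e from rfl, range_comp, e.range_coe, image_univ, Subtype.range_coe]
  choose V hV hVU using fun i => hj.isInducing.isOpen_iff.1 (hU i)
  obtain ⟨Q, hQ, hQSV, hKQ⟩ := hS.exists_isCompact_cover (hK.image hj.continuous)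
    (hrange ▸ image_subset_range j K) hV (by simpa [image_subset_iff, hVU] using hKU)
  refine ⟨fun i => j ⁻¹' Q i, fun i => ?_, fun i => ?_, by simpa [image_subset_iff] using hKQ⟩
  · exact hj.isInducing.isCompact_preimage' (hQ i) (hrange ▸ (hQSV i).trans inter_subset_left)
  · exact hVU i ▸ preimage_mono ((hQSV i).trans inter_subset_right)

/-- Every quasi-Polish space is a Wilker space. -/
theorem quasiPolish_wilker (X : Type*) [TopologicalSpace X] (h : QuasiPolish X)
    (U₁ U₂ K : Set X) (hU₁ : IsOpen U₁) (hU₂ : IsOpen U₂) (hK : IsCompact K)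
    (hKU : K ⊆ U₁ ∪ U₂) :
    ∃ K₁ K₂ : Set X, IsCompact K₁ ∧ IsCompact K₂ ∧ K₁ ⊆ U₁ ∧ K₂ ⊆ U₂ ∧ K ⊆ K₁ ∪ K₂ := by
  rw [union_eq_iUnion] at hKU
  obtain ⟨Q, hQ, hQU, hKQ⟩ := h.exists_isCompact_cover hK (U := fun b => cond b U₁ U₂)
    (fun b => by cases b <;> assumption) hKU
  exact ⟨Q true, Q false, hQ true, hQ false, hQU true, hQU false,
    hKQ.trans <| iUnion_subset fun b => by cases b <;> simp⟩
end
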